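/- arXiv:1905.09494 — 14 statements merged into one kernel-verified Lean document; each statement's English description precedes it below -/
import Mathlib

section
/- Let G be a torsion-free group and let α = α₁h₁ + α₂h₂ + α₃h₃ be a zero divisor of support size 3 in the rational group algebra ℚ[G] (so α₁, α₂, α₃ ∈ ℚ are nonzero and h₁, h₂, h₃ ∈ G are pairwise distinct). Then there exist signs ε₁, ε₂, ε₃ ∈ {1, −1}, with either all εᵢ equal to 1 or exactly one εᵢ equal to −1, such that ε₁h₁ + ε₂h₂ + ε₃h₃ is a zero divisor in the integral group ring ℤ[G]. -/
/-!
Clearing denominators gives `A₁, A₂, A₃ ∈ ℤ`, which we may take coprime, and a nonzero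
`B ∈ ℤ[G]`, which we may take primitive, with `(A₁h₁ + A₂h₂ + A₃h₃) B = 0`. If a prime `p`
divided `A₁`, then reducing mod `p` gives `(Ā₂h₂ + Ā₃h₃) B̄ = 0` with `B̄ ≠ 0`. Over a domain,
`a g + b h` with `a ≠ 0` and `g ≠ h` annihilates nothing: the coefficient of the product at `g x`
is `a B(x) + b B(h⁻¹g x)`, so `B(x) ≠ 0` forces `B((h⁻¹g)ⁿ x) ≠ 0` for all `n`, and `h⁻¹g` has
infinite order. Hence `p` divides `A₂` and `A₃` as well, contradicting coprimality; so every
`Aᵢ` is `±1`, and after multiplying by `-1` if necessary at most one sign is negative.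
-/

/-- An element `a` of a ring is a (right) zero divisor in the sense of the paper:
`a ≠ 0` and `a * b = 0` for some nonzero `b`. -/
def IsZeroDivisorElem {R : Type*} [Ring R] (a : R) : Prop :=
  a ≠ 0 ∧ ∃ b : R, b ≠ 0 ∧ a * b = 0

/-- A monoid is torsion-free if its only element of finite order is the identity. -/
def Monoid.IsTorsionFree (G : Type*) [Monoid G] : Prop :=
  ∀ g : G, g ≠ 1 → ¬IsOfFinOrder g

open MonoidAlgebra

namespace MonoidAlgebra

variable {R G : Type*}

theorem eq_zero_of_single_add_single_mul_eq_zero [Ring R] [NoZeroDivisors R] [Group G]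
    (hG : Monoid.IsTorsionFree G) {g h : G} (hgh : g ≠ h) {a b : R} (ha : a ≠ 0)
    {B : R[G]} (hB : (single g a + single h b) * B = 0) : B = 0 := by
  by_contra hB0
  obtain ⟨y, hy⟩ : ∃ y, B.coeff y ≠ 0 := by
    by_contra! h0
    exact hB0 (MonoidAlgebra.ext (Finsupp.ext h0))
  set v := h⁻¹ * g
  have step : ∀ x, B.coeff x ≠ 0 → B.coeff (v * x) ≠ 0 := by
    intro x hx hvx
    have hcoeff := congrArg (fun C : R[G] => C.coeff (g * x)) hB
    simp only [add_mul, coeff_add, Finsupp.add_apply, coeff_single_mul_apply, coeff_zero,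
      Finsupp.zero_apply] at hcoeff
    rw [inv_mul_cancel_left, ← mul_assoc, hvx, mul_zero, add_zero] at hcoeff
    exact mul_ne_zero ha hx hcoeff
  have orbit : ∀ n : ℕ, B.coeff (v ^ n * y) ≠ 0 := by
    intro n
    induction n with
    | zero => simpa using hy
    | succ n ih => simpa [pow_succ', mul_assoc] using step _ ih
  have hv : ¬IsOfFinOrder v := hG v fun h1 => hgh (inv_mul_eq_one.mp h1).symm
  exact Set.infinite_of_injective_forall_mem
    (fun m n hmn => injective_pow_iff_not_isOfFinOrder.mpr hv (mul_right_cancel hmn))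
    (fun n => Finsupp.mem_support_iff.mpr (orbit n))
    B.coeff.support.finite_toSet

theorem single_add_single_add_single_ne_zero [Semiring R] {h₁ h₂ h₃ : G} (h12 : h₁ ≠ h₂)
    (h13 : h₁ ≠ h₃) {a₁ a₂ a₃ : R} (ha₁ : a₁ ≠ 0) :
    single h₁ a₁ + single h₂ a₂ + single h₃ a₃ ≠ 0 := by
  intro h
  simpa [Finsupp.single_apply, h12.symm, h13.symm, ha₁] using congrArg (·.coeff h₁) h

def IsPrimitive [Semiring R] (B : R[G]) : Prop :=
  ∀ r : R, (∀ g, r ∣ B.coeff g) → IsUnit r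

theorem dvd_of_single_add_single_add_single_mul_eq_zero [CommRing R] [Group G]
    (hG : Monoid.IsTorsionFree G) {h₁ h₂ h₃ : G} (h23 : h₂ ≠ h₃) {p : R} (hp : Prime p)
    {A₁ A₂ A₃ : R} {B : R[G]} (hB : B.IsPrimitive)
    (hAB : (single h₁ A₁ + single h₂ A₂ + single h₃ A₃) * B = 0) (hA₁ : p ∣ A₁) : p ∣ A₂ := by
  have := (Ideal.span_singleton_prime hp.ne_zero).mpr hp
  set π := Ideal.Quotient.mk (Ideal.span {p})
  have hπ : ∀ r, π r = 0 ↔ p ∣ r := Ideal.Quotient.eq_zero_iff_dvd p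
  by_contra hA₂
  have hB' : mapRingHom G π B = 0 := by
    refine eq_zero_of_single_add_single_mul_eq_zero hG h23 (b := π A₃) ((hπ _).not.mpr hA₂) ?_
    simpa [(hπ A₁).mpr hA₁] using congrArg (mapRingHom G π) hAB
  exact hp.not_isUnit (hB p fun g => (hπ _).mp (by simpa using congrArg (·.coeff g) hB'))

theorem exists_eq_smul_isPrimitive [CommSemiring R] [IsDomain R] [NormalizedGCDMonoid R]
    {B : R[G]} (hB : B ≠ 0) : ∃ (c : R) (B' : R[G]), B = c • B' ∧ B'.IsPrimitive := by
  classical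
  set s := B.coeff.support
  have hs : s.Nonempty := Finsupp.support_nonempty_iff.mpr fun h => hB (by ext1; exact h)
  obtain ⟨f, hf, hgcd⟩ := s.extract_gcd B.coeff hs
  refine ⟨s.gcd B.coeff, ofCoeff (Finsupp.indicator s fun g _ => f g), ?_, ?_⟩
  · ext g
    by_cases hg : g ∈ s
    · simp [Finsupp.indicator_apply, hg, hf g hg]
    · simp [Finsupp.indicator_apply, hg, Finsupp.notMem_support_iff.mp hg]
  · intro r hr
    refine isUnit_of_dvd_one (hgcd ▸ Finset.dvd_gcd fun g hg => ?_)
    simpa [Finsupp.indicator_apply, hg] using hr g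

theorem isUnit_of_single_add_single_add_single_mul_eq_zero [CommRing R] [IsDomain R]
    [NormalizedGCDMonoid R] [WfDvdMonoid R] [Group G] (hG : Monoid.IsTorsionFree G)
    {h₁ h₂ h₃ : G} (h23 : h₂ ≠ h₃) {A₁ A₂ A₃ : R} (hA₁ : A₁ ≠ 0)
    (hA : ∀ r, r ∣ A₁ → r ∣ A₂ → r ∣ A₃ → IsUnit r) {B : R[G]} (hB : B ≠ 0)
    (hAB : (single h₁ A₁ + single h₂ A₂ + single h₃ A₃) * B = 0) : IsUnit A₁ := by
  obtain ⟨c, B, rfl, hB'⟩ := exists_eq_smul_isPrimitive hB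
  replace hAB : (single h₁ A₁ + single h₂ A₂ + single h₃ A₃) * B = 0 := by
    rw [mul_smul_comm, smul_eq_zero] at hAB
    exact hAB.resolve_left (by rintro rfl; simp at hB)
  by_contra hA₁u
  obtain ⟨p, hp, hpA₁⟩ := WfDvdMonoid.exists_irreducible_factor hA₁u hA₁
  refine hp.not_isUnit (hA p hpA₁ ?_ ?_)
  · exact dvd_of_single_add_single_add_single_mul_eq_zero hG h23 hp.prime hB' hAB hpA₁
  · rw [add_right_comm] at hAB
    exact dvd_of_single_add_single_add_single_mul_eq_zero hG h23.symm hp.prime hB' hAB hpA₁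

theorem exists_units_single_add_single_add_single_mul_eq_zero [CommRing R] [IsDomain R]
    [NormalizedGCDMonoid R] [WfDvdMonoid R] [Group G] (hG : Monoid.IsTorsionFree G)
    {h₁ h₂ h₃ : G} (h12 : h₁ ≠ h₂) (h13 : h₁ ≠ h₃) (h23 : h₂ ≠ h₃) {A₁ A₂ A₃ : R}
    (hA₁ : A₁ ≠ 0) (hA₂ : A₂ ≠ 0) (hA₃ : A₃ ≠ 0) {B : R[G]} (hB : B ≠ 0)
    (hAB : (single h₁ A₁ + single h₂ A₂ + single h₃ A₃) * B = 0) :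
    ∃ u₁ u₂ u₃ : R, IsUnit u₁ ∧ IsUnit u₂ ∧ IsUnit u₃ ∧
      (single h₁ u₁ + single h₂ u₂ + single h₃ u₃) * B = 0 := by
  set d := gcd A₁ (gcd A₂ A₃)
  have hd : d ≠ 0 := fun h => hA₁ ((gcd_eq_zero_iff _ _).mp h).1
  obtain ⟨u₁, hu₁⟩ : d ∣ A₁ := gcd_dvd_left _ _
  obtain ⟨u₂, hu₂⟩ : d ∣ A₂ := (gcd_dvd_right _ _).trans (gcd_dvd_left _ _)
  obtain ⟨u₃, hu₃⟩ : d ∣ A₃ := (gcd_dvd_right _ _).trans (gcd_dvd_right _ _)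
  have hu : ∀ r, r ∣ u₁ → r ∣ u₂ → r ∣ u₃ → IsUnit r := by
    intro r h₁ h₂ h₃
    have hdr : d * r ∣ d * 1 := by
      rw [mul_one]
      refine dvd_gcd ?_ (dvd_gcd ?_ ?_)
      exacts [hu₁ ▸ mul_dvd_mul_left d h₁, hu₂ ▸ mul_dvd_mul_left d h₂,
        hu₃ ▸ mul_dvd_mul_left d h₃]
    exact isUnit_of_dvd_one ((mul_dvd_mul_iff_left hd).mp hdr)
  rw [hu₁, hu₂, hu₃] at hAB
  replace hAB : (single h₁ u₁ + single h₂ u₂ + single h₃ u₃) * B = 0 := by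
    simp only [← smul_eq_mul d, ← smul_single, ← smul_add, smul_mul_assoc, smul_eq_zero, hd,
      false_or] at hAB
    exact hAB
  refine ⟨u₁, u₂, u₃, ?_, ?_, ?_, hAB⟩
  · exact isUnit_of_single_add_single_add_single_mul_eq_zero hG h23
      (right_ne_zero_of_mul (hu₁ ▸ hA₁)) hu hB hAB
  · refine isUnit_of_single_add_single_add_single_mul_eq_zero (h₁ := h₂) hG h13
      (right_ne_zero_of_mul (hu₂ ▸ hA₂)) (fun r h₂ h₁ h₃ => hu r h₁ h₂ h₃) hB ?_
    rwa [add_comm (single h₂ u₂)]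
  · refine isUnit_of_single_add_single_add_single_mul_eq_zero (h₁ := h₃) hG h12
      (right_ne_zero_of_mul (hu₃ ▸ hA₃)) (fun r h₃ h₁ h₂ => hu r h₁ h₂ h₃) hB ?_
    rwa [add_comm (single h₃ u₃), add_right_comm]

theorem exists_mapRingHom_eq_smul [CommRing R] {S : Type*} [CommRing S] [Algebra R S]
    (M : Submonoid R) [IsLocalization M S] [Monoid G] (β : S[G]) :
    ∃ (m : M) (B : R[G]), mapRingHom G (algebraMap R S) B = algebraMap R S m • β := by
  induction β using MonoidAlgebra.induction_linear with
  | zero => exact ⟨1, 0, by simp⟩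
  | add x y hx hy =>
    obtain ⟨m, B, hB⟩ := hx
    obtain ⟨n, C, hC⟩ := hy
    refine ⟨m * n, (n : R) • B + (m : R) • C, ?_⟩
    ext g
    have hBg := congrArg (·.coeff g) hB
    have hCg := congrArg (·.coeff g) hC
    simp only [coeff_mapRingHom, coeff_smul, Finsupp.smul_apply, smul_eq_mul] at hBg hCg
    simp only [map_add, coeff_add, Finsupp.add_apply, coeff_mapRingHom, coeff_smul,
      Finsupp.smul_apply, smul_eq_mul, map_mul, hBg, hCg, Submonoid.coe_mul]
    ring
  | single g z =>
    obtain ⟨⟨r, m⟩, h⟩ := IsLocalization.surj M z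
    exact ⟨m, single g r, by simp [← h, Algebra.smul_def, mul_comm]⟩

theorem exists_ne_zero_mul_eq_zero_of_mapRingHom_mul_eq_zero [CommRing R] {S : Type*}
    [CommRing S] [Algebra R S] {M : Submonoid R} [IsLocalization M S]
    (hM : M ≤ nonZeroDivisors R) [Monoid G]
    {A : R[G]} {β : S[G]} (hβ : β ≠ 0) (hAβ : mapRingHom G (algebraMap R S) A * β = 0) :
    ∃ B : R[G], B ≠ 0 ∧ A * B = 0 := by
  obtain ⟨m, B, hB⟩ := exists_mapRingHom_eq_smul M β
  have hinj : Function.Injective (mapRingHom G (algebraMap R S)) :=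
    map_injective _ (IsLocalization.injective S hM)
  refine ⟨B, fun h => hβ ?_, hinj ?_⟩
  · rwa [h, map_zero, eq_comm, (IsLocalization.map_units S m).smul_eq_zero] at hB
  · rw [map_mul, hB, mul_smul_comm, hAβ, smul_zero, map_zero]

end MonoidAlgebra

theorem IsZeroDivisorElem.neg {R : Type*} [Ring R] {a : R} (ha : IsZeroDivisorElem a) :
    IsZeroDivisorElem (-a) :=
  ⟨neg_ne_zero.mpr ha.1, ha.2.imp fun _ hb => ⟨hb.1, by rw [neg_mul, hb.2, neg_zero]⟩⟩

theorem exists_signs_isZeroDivisorElem {G : Type*} [Group G] {h₁ h₂ h₃ : G} (h12 : h₁ ≠ h₂)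
    (h13 : h₁ ≠ h₃) {u₁ u₂ u₃ : ℤ} (hu₁ : IsUnit u₁) (hu₂ : IsUnit u₂) (hu₃ : IsUnit u₃)
    {B : ℤ[G]} (hB : B ≠ 0) (huB : (single h₁ u₁ + single h₂ u₂ + single h₃ u₃) * B = 0) :
    ∃ ε₁ ε₂ ε₃ : ℤ,
      ((ε₁ = 1 ∧ ε₂ = 1 ∧ ε₃ = 1) ∨ (ε₁ = -1 ∧ ε₂ = 1 ∧ ε₃ = 1) ∨
        (ε₁ = 1 ∧ ε₂ = -1 ∧ ε₃ = 1) ∨ (ε₁ = 1 ∧ ε₂ = 1 ∧ ε₃ = -1)) ∧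
      IsZeroDivisorElem (single h₁ ε₁ + single h₂ ε₂ + single h₃ ε₃ : ℤ[G]) := by
  have hzd : IsZeroDivisorElem (single h₁ u₁ + single h₂ u₂ + single h₃ u₃) :=
    ⟨single_add_single_add_single_ne_zero h12 h13 hu₁.ne_zero, B, hB, huB⟩
  have hzd' : IsZeroDivisorElem (single h₁ (-u₁) + single h₂ (-u₂) + single h₃ (-u₃)) := by
    simpa only [single_neg, neg_add] using hzd.neg
  rcases Int.isUnit_iff.mp hu₁ with rfl | rfl <;> rcases Int.isUnit_iff.mp hu₂ with rfl | rfl <;>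
    rcases Int.isUnit_iff.mp hu₃ with rfl | rfl <;>
    first
    | (refine ⟨_, _, _, ?_, hzd⟩; norm_num; done)
    | (refine ⟨_, _, _, ?_, hzd'⟩; norm_num)

theorem zero_divisor_support_three_rational
    {G : Type*} [Group G] (hG : Monoid.IsTorsionFree G)
    (h₁ h₂ h₃ : G) (a₁ a₂ a₃ : ℚ)
    (ha₁ : a₁ ≠ 0) (ha₂ : a₂ ≠ 0) (ha₃ : a₃ ≠ 0)
    (h12 : h₁ ≠ h₂) (h13 : h₁ ≠ h₃) (h23 : h₂ ≠ h₃)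
    (hzd : IsZeroDivisorElem
      (MonoidAlgebra.single h₁ a₁ + MonoidAlgebra.single h₂ a₂ + MonoidAlgebra.single h₃ a₃ :
        MonoidAlgebra ℚ G)) :
    ∃ ε₁ ε₂ ε₃ : ℤ,
      ((ε₁ = 1 ∧ ε₂ = 1 ∧ ε₃ = 1) ∨ (ε₁ = -1 ∧ ε₂ = 1 ∧ ε₃ = 1) ∨
        (ε₁ = 1 ∧ ε₂ = -1 ∧ ε₃ = 1) ∨ (ε₁ = 1 ∧ ε₂ = 1 ∧ ε₃ = -1)) ∧
      IsZeroDivisorElem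
        (MonoidAlgebra.single h₁ ε₁ + MonoidAlgebra.single h₂ ε₂ + MonoidAlgebra.single h₃ ε₃ :
          MonoidAlgebra ℤ G) := by
  obtain ⟨-, β, hβ, hαβ⟩ := hzd
  obtain ⟨n, hn⟩ := IsLocalization.exist_integer_multiples_of_finset (nonZeroDivisors ℤ)
    ({a₁, a₂, a₃} : Finset ℚ)
  obtain ⟨A₁, hA₁⟩ := hn a₁ (by simp)
  obtain ⟨A₂, hA₂⟩ := hn a₂ (by simp)
  obtain ⟨A₃, hA₃⟩ := hn a₃ (by simp)
  have hA : ∀ {A : ℤ} {a : ℚ}, a ≠ 0 → algebraMap ℤ ℚ A = (n : ℤ) • a → A ≠ 0 := by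
    rintro A a ha hAa rfl
    simp [nonZeroDivisors.coe_ne_zero n, ha] at hAa
  obtain ⟨B, hB, hAB⟩ := exists_ne_zero_mul_eq_zero_of_mapRingHom_mul_eq_zero le_rfl hβ
    (A := single h₁ A₁ + single h₂ A₂ + single h₃ A₃)
    (by simp only [map_add, mapRingHom_single, hA₁, hA₂, hA₃, ← smul_single, ← smul_add,
      smul_mul_assoc, hαβ, smul_zero])
  obtain ⟨u₁, u₂, u₃, hu₁, hu₂, hu₃, huB⟩ := exists_units_single_add_single_add_single_mul_eq_zero
    hG h12 h13 h23 (hA ha₁ hA₁) (hA ha₂ hA₂) (hA ha₃ hA₃) hB hAB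
  exact exists_signs_isZeroDivisorElem h12 h13 hu₁ hu₂ hu₃ hB huB
end

section
/- Let p be a prime, G a finite p-group, and F a field of characteristic p. If α = Σ_{g∈G} α_g g ∈ F[G] satisfies Σ_{g∈G} α_g ≠ 0, then α is invertible in F[G]; in particular, α is not a zero divisor of F[G]. -/
/-!
A finite `p`-group acting on a nonzero elementary abelian `p`-group fixes a nonzero element:
in the finite subgroup generated by one orbit, the number of fixed points is divisible by `p`,
and `0` is one of them. Let `G` act by left multiplication on the left annihilator of `α` in
`F[G]`. A fixed element `w` has constant coefficients, so `w * α` is `w` scaled by the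
augmentation of `α`; hence the annihilator is zero, `α` is right regular, and right regular
elements of the finite-dimensional algebra `F[G]` are units.
-/

theorem AddSubgroup.finite_closure_of_forall_nsmul_eq_zero {V : Type*} [AddCommGroup V]
    {n : ℕ} (hn : n ≠ 0) (hV : ∀ v : V, n • v = 0) (s : Set V) [Finite s] :
    Finite (closure s) := by
  have := Module.Finite.iff_addGroup_fg.mpr (AddGroup.closure_finite_fg s)
  refine Module.finite_of_fg_torsion _ fun w => ?_
  exact ⟨⟨n, mem_nonZeroDivisors_of_ne_zero (by exact_mod_cast hn)⟩,
    Subtype.ext (by simpa using hV w)⟩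

theorem IsPGroup.exists_smul_eq_self_ne_zero {p : ℕ} [Fact p.Prime] {G : Type*} [Group G]
    [Finite G] (hG : IsPGroup p G) {V : Type*} [AddCommGroup V] [DistribMulAction G V]
    (hV : ∀ v : V, p • v = 0) [Nontrivial V] : ∃ w : V, w ≠ 0 ∧ ∀ g : G, g • w = w := by
  obtain ⟨v, hv⟩ := exists_ne (0 : V)
  let W : AddSubgroup V := .closure (Set.range fun g : G => g • v)
  have hW : ∀ g : G, ∀ w ∈ W, g • w ∈ W := fun g =>
    AddSubgroup.closure_le (K := W.comap (DistribSMul.toAddMonoidHom V g)) |>.mpr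
      (by rintro _ ⟨h, rfl⟩; exact AddSubgroup.subset_closure ⟨g * h, mul_smul g h v⟩)
  have : Finite W :=
    AddSubgroup.finite_closure_of_forall_nsmul_eq_zero (Fact.out : p.Prime).ne_zero hV _
  let _ : MulAction G W :=
    { smul g w := ⟨g • w, hW g w w.2⟩
      one_smul w := Subtype.ext (one_smul G (w : V))
      mul_smul g h w := Subtype.ext (mul_smul g h (w : V)) }
  have hvW : (⟨v, AddSubgroup.subset_closure ⟨1, one_smul G v⟩⟩ : W) ≠ 0 := by simpa using hv
  have hp : p ∣ Nat.card W :=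
    addOrderOf_eq_prime (Subtype.ext (hV v)) hvW ▸ addOrderOf_dvd_natCard _
  obtain ⟨w, hw, hw0⟩ := hG.exists_fixed_point_of_prime_dvd_card_of_fixed_point W hp
    (a := 0) fun g => Subtype.ext (smul_zero g)
  exact ⟨w, fun h => hw0 (Subtype.ext h.symm), fun g => congrArg Subtype.val (hw g)⟩

namespace MonoidAlgebra

variable {k G : Type*} [Group G]

theorem coeff_eq_coeff_one_of_forall_of_mul_eq [Semiring k] {w : MonoidAlgebra k G}
    (hw : ∀ g : G, of k G g * w = w) (g : G) : w.coeff g = w.coeff 1 := by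
  simpa using (congrArg (coeff · g) (hw g)).symm

theorem mul_eq_sum_coeff_smul_of_forall_of_mul_eq [CommSemiring k] {w : MonoidAlgebra k G}
    (hw : ∀ g : G, of k G g * w = w) (x : MonoidAlgebra k G) :
    w * x = (∑ g ∈ x.coeff.support, x.coeff g) • w := by
  ext g
  rw [coeff_mul_apply_right, coeff_smul, Finsupp.smul_apply, smul_eq_mul, Finsupp.sum,
    Finset.sum_mul]
  refine Finset.sum_congr rfl fun h _ => ?_
  rw [coeff_eq_coeff_one_of_forall_of_mul_eq hw, coeff_eq_coeff_one_of_forall_of_mul_eq hw g,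
    mul_comm]

theorem isRightRegular_of_sum_coeff_ne_zero {p : ℕ} [Fact p.Prime] [Finite G]
    (hG : IsPGroup p G) [Field k] [CharP k p] {α : MonoidAlgebra k G}
    (hα : ∑ g ∈ α.coeff.support, α.coeff g ≠ 0) : IsRightRegular α := by
  refine isRightRegular_iff_left_eq_zero_of_mul.mpr fun x hx => ?_
  by_contra hx0
  let L := LinearMap.ker (LinearMap.toSpanSingleton (MonoidAlgebra k G) _ α)
  have : Nontrivial L := Submodule.nontrivial_iff_ne_bot.mpr fun h => hx0 (by
    simpa [h] using (show x ∈ L from hx))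
  let _ : DistribMulAction G L := .compHom L (of k G)
  obtain ⟨w, hw0, hw⟩ := hG.exists_smul_eq_self_ne_zero (V := L) fun v =>
    Subtype.ext (by simp [← Nat.cast_smul_eq_nsmul k])
  have hwα : (w : MonoidAlgebra k G) * α = 0 := w.2
  rw [mul_eq_sum_coeff_smul_of_forall_of_mul_eq fun g => congrArg Subtype.val (hw g)] at hwα
  exact hw0 (Subtype.ext ((smul_eq_zero.mp hwα).resolve_left hα))

end MonoidAlgebra

theorem isUnit_of_augmentation_ne_zero_finite_p_group
    {p : ℕ} (hp : p.Prime) {G : Type*} [Group G] [Finite G] (hG : IsPGroup p G)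
    {F : Type*} [Field F] [CharP F p]
    (α : MonoidAlgebra F G) (hα : ∑ g ∈ α.coeff.support, α.coeff g ≠ 0) :
    IsUnit α ∧ ¬ IsZeroDivisorElem α := by
  have := Fact.mk hp
  have := IsArtinianRing.of_finite F (MonoidAlgebra F G)
  have hu : IsUnit α := IsArtinianRing.isUnit_iff_isRightRegular.mpr
    (MonoidAlgebra.isRightRegular_of_sum_coeff_ne_zero hG hα)
  exact ⟨hu, fun ⟨_, _, hb, hαb⟩ => hb (hu.mul_right_eq_zero.mp hαb)⟩
end

section
/- Let G be a residually finite 2-group. Then the group algebra F₂[G] over the field F₂ with two elements contains no zero divisor whose support size is odd. -/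
/-- `G` is a residually finite `p`-group: every nontrivial element is excluded from
a normal subgroup of finite index such that every element of the quotient has
`p`-power order (i.e. the quotient is a finite `p`-group). -/
def IsResiduallyFinitePGroup (p : ℕ) (G : Type*) [Group G] : Prop :=
  ∀ g : G, g ≠ 1 → ∃ N : Subgroup G, N.Normal ∧ g ∉ N ∧ N.FiniteIndex ∧
    ∀ y : G, ∃ k : ℕ, y ^ p ^ k ∈ N

/-! If `α * β = 0` with `β ≠ 0`, pass to a finite `2`-group quotient `Q = G ⧸ N` such that
the projection is injective on the support of `β`: the images still satisfy `α' * β' = 0` with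
`β' ≠ 0`, while the augmentation of `α'` is `|supp α| = 1` in `𝔽₂`. Now `Q` acts by right
multiplication on the finite vector space `{x | α' * x = 0}`. A fixed vector has constant
coefficients `c`, and then `α' * x` has constant coefficients `augmentation α' * c`, so `0` is
the only fixed vector; but a nonzero space has even size, hence a second fixed point. -/

theorem Module.prime_dvd_natCard (p : ℕ) [Fact p.Prime] {k V : Type*} [Field k] [Finite k]
    [CharP k p] [AddCommGroup V] [Module k V] [Finite V] [Nontrivial V] : p ∣ Nat.card V := by
  have : Fintype k := Fintype.ofFinite k
  have : Module.Finite k V := Module.Finite.of_finite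
  have hk : p ∣ Nat.card k := by
    rw [Nat.card_eq_fintype_card, ← prime_dvd_char_iff_dvd_card, ringChar.eq k p]
  rw [Module.natCard_eq_pow_finrank (K := k)]
  exact dvd_pow hk Module.finrank_pos.ne'

namespace MonoidAlgebra

section Augmentation

variable {R M N : Type*} [Semiring R]

def augmentation (x : R[M]) : R := x.coeff.sum fun _ r => r

theorem augmentation_mapDomain (f : M → N) (x : R[M]) :
    augmentation (mapDomain f x) = augmentation x :=
  Finsupp.sum_mapDomain_index (fun _ => rfl) (fun _ _ _ => rfl)

theorem coeff_mul_of_coeff_eq_const [Group M] (x : R[M]) {y : R[M]} {c : R}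
    (hy : ∀ g, y.coeff g = c) (g : M) : (x * y).coeff g = augmentation x * c := by
  simp only [coeff_mul_apply_left, hy, augmentation, Finsupp.sum_mul]

theorem augmentation_eq_card_support (x : (ZMod 2)[M]) :
    augmentation x = x.coeff.support.card := by
  rw [augmentation, Finsupp.sum, Finset.card_eq_sum_ones, Nat.cast_sum]
  have eq_one_of_ne_zero : ∀ c : ZMod 2, c ≠ 0 → c = 1 := by decide
  exact Finset.sum_congr rfl fun g hg => by
    simpa using eq_one_of_ne_zero _ (Finsupp.mem_support_iff.mp hg)

end Augmentation

theorem mapDomain_eq_zero_of_injOn {R M N : Type*} [Semiring R] {f : M → N} {x : R[M]}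
    (hf : Set.InjOn f x.coeff.support) (hx : mapDomain f x = 0) : x = 0 :=
  coeff_injective <| Finsupp.mapDomain_injOn _ hf (fun _ h => h) (by simp) <|
    (congrArg coeff hx).trans Finsupp.mapDomain_zero.symm

section RightAction

variable {k Q : Type*} [CommSemiring k] [Group Q]

noncomputable abbrev kerMulLeftMulAction (a : k[Q]) :
    MulAction Q (LinearMap.ker (LinearMap.mulLeft k a)) where
  smul g x := ⟨x * of k Q g⁻¹, by simp [← mul_assoc, show a * x = 0 from x.2]⟩
  one_smul x := Subtype.ext <| by show x.1 * of k Q 1⁻¹ = x.1; simp [← one_def]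
  mul_smul g h x := Subtype.ext <| by
    show x.1 * of k Q (g * h)⁻¹ = x.1 * of k Q h⁻¹ * of k Q g⁻¹; simp [mul_assoc]

theorem coeff_eq_coeff_one_of_mul_of_eq_self {x : k[Q]} (hx : ∀ g : Q, x * of k Q g⁻¹ = x)
    (g : Q) : x.coeff g = x.coeff 1 := by
  simpa using congrArg (coeff · 1) (hx g)

end RightAction

theorem eq_zero_of_mul_eq_zero_of_isPGroup {p : ℕ} [Fact p.Prime] {k Q : Type*} [Field k]
    [Finite k] [CharP k p] [Group Q] [Finite Q] (hQ : IsPGroup p Q) {a b : k[Q]}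
    (ha : augmentation a ≠ 0) (hab : a * b = 0) : b = 0 := by
  let := kerMulLeftMulAction a
  have : Finite k[Q] := Module.finite_of_finite k
  by_contra hb
  have : Nontrivial (LinearMap.ker (LinearMap.mulLeft k a)) :=
    ⟨⟨b, hab⟩, 0, fun h => hb (congrArg Subtype.val h)⟩
  obtain ⟨x, hx, hx0⟩ := hQ.exists_fixed_point_of_prime_dvd_card_of_fixed_point _
    (Module.prime_dvd_natCard p (k := k)) (a := (0 : LinearMap.ker (LinearMap.mulLeft k a)))
    fun g => Subtype.ext (zero_mul (of k Q g⁻¹))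
  have hconst : ∀ g, x.1.coeff g = x.1.coeff 1 :=
    coeff_eq_coeff_one_of_mul_of_eq_self fun g => congrArg Subtype.val (hx g)
  have hx1 : augmentation a * x.1.coeff 1 = 0 := by
    rw [← coeff_mul_of_coeff_eq_const a hconst 1, show a * x.1 = 0 from x.2, coeff_zero,
      Finsupp.zero_apply]
  refine hx0 (Subtype.ext (coeff_injective (Finsupp.ext fun g => ?_))).symm
  rw [hconst, (mul_eq_zero.mp hx1).resolve_left ha]
  rfl

end MonoidAlgebra

open Finset MonoidAlgebra

namespace IsResiduallyFinitePGroup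

variable {p : ℕ} {G : Type*} [Group G]

theorem exists_normal_finiteIndex_forall_notMem (hG : IsResiduallyFinitePGroup p G)
    (S : Finset G) (hS : 1 ∉ S) : ∃ N : Subgroup G, N.Normal ∧ N.FiniteIndex ∧
      (∀ y : G, ∃ k : ℕ, y ^ p ^ k ∈ N) ∧ ∀ g ∈ S, g ∉ N := by
  classical
  induction S using Finset.induction_on with
  | empty => exact ⟨⊤, inferInstance, inferInstance, fun _ => ⟨0, Subgroup.mem_top _⟩, by simp⟩
  | insert g S _ ih =>
    obtain ⟨N₁, hN₁, hgN₁, hfin₁, hpow₁⟩ := hG g fun h => hS (h ▸ mem_insert_self g S)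
    obtain ⟨N₂, hN₂, hfin₂, hpow₂, hSN₂⟩ := ih fun h => hS (mem_insert_of_mem h)
    refine ⟨N₁ ⊓ N₂, inferInstance, inferInstance, fun y => ?_, ?_⟩
    · obtain ⟨k₁, hk₁⟩ := hpow₁ y
      obtain ⟨k₂, hk₂⟩ := hpow₂ y
      refine ⟨k₁ + k₂, ?_, ?_⟩
      · rw [pow_add, pow_mul]
        exact pow_mem hk₁ _
      · rw [pow_add, mul_comm, pow_mul]
        exact pow_mem hk₂ _
    · simp only [mem_insert, forall_eq_or_imp, Subgroup.mem_inf, not_and_or]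
      exact ⟨Or.inl hgN₁, fun h hh => Or.inr (hSN₂ h hh)⟩

theorem exists_isPGroup_quotient_injOn (hG : IsResiduallyFinitePGroup p G) (s : Finset G) :
    ∃ (N : Subgroup G) (_ : N.Normal), N.FiniteIndex ∧ IsPGroup p (G ⧸ N) ∧
      Set.InjOn (QuotientGroup.mk : G → G ⧸ N) s := by
  classical
  obtain ⟨N, hN, hfin, hpow, hsep⟩ := hG.exists_normal_finiteIndex_forall_notMem
    (((s ×ˢ s).image fun q => q.1⁻¹ * q.2).erase 1) (notMem_erase 1 _)
  refine ⟨N, hN, hfin, fun q => ?_, fun x hx y hy hxy => ?_⟩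
  · induction q using QuotientGroup.induction_on with
    | H y =>
      obtain ⟨k, hk⟩ := hpow y
      exact ⟨k, by rwa [← QuotientGroup.mk_pow, QuotientGroup.eq_one_iff]⟩
  · by_contra hne
    refine hsep _ (mem_erase.mpr ⟨?_, mem_image.mpr ⟨(x, y), mem_product.mpr ⟨hx, hy⟩, rfl⟩⟩)
      (QuotientGroup.eq.mp hxy)
    simpa [inv_mul_eq_one] using hne

end IsResiduallyFinitePGroup

theorem no_odd_support_zero_divisor_of_residually_finite_two_group
    {G : Type*} [Group G] (hres : IsResiduallyFinitePGroup 2 G) :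
    ¬ ∃ α : MonoidAlgebra (ZMod 2) G, Odd α.coeff.support.card ∧ IsZeroDivisorElem α := by
  rintro ⟨α, hodd, -, β, hβ, hαβ⟩
  obtain ⟨N, _, _, hQ, hinj⟩ := hres.exists_isPGroup_quotient_injOn β.coeff.support
  let π := QuotientGroup.mk' N
  have hα : augmentation (mapDomain π α) ≠ 0 := by
    rw [augmentation_mapDomain, augmentation_eq_card_support, Ne,
      ZMod.natCast_eq_zero_iff_even, Nat.not_even_iff_odd]
    exact hodd
  have hαβ' : mapDomain π α * mapDomain π β = 0 := by
    rw [← mapDomain_mul, hαβ, mapDomain_zero]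
  exact hβ (mapDomain_eq_zero_of_injOn hinj (eq_zero_of_mul_eq_zero_of_isPGroup hQ hα hαβ'))
end

section
/- For a positive integer n, the group algebra F₂[ℤ/nℤ] contains a zero divisor α with |supp(α)| = 3 if and only if there exists an odd positive integer t dividing n such that gcd(1 + X^t, 1 + (1 + X)^t), computed in the polynomial ring F₂[X], has degree greater than 1. -/
/-!
An element of support three of `F₂[ℤ/nℤ]` is the image `g^a + g^b + g^c` of a trinomial under
`F₂[X] → F₂[ℤ/nℤ]`, `X ↦ g`, whose kernel is `(X^n - 1)`; so it is a zero divisor iff the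
trinomial and `X^n - 1` have a common root `θ` in `F̄₂`. Then `x = θ^b / θ^a` and
`1 + x = θ^c / θ^a` are `n`-th roots of unity, hence, Frobenius being injective, `t`-th roots
of unity for the odd part `t` of `n`: `x` is a common root of `1 + X^t` and `1 + (1 + X)^t`,
and it is not in `F₂`, so the gcd has degree at least two. Conversely, for odd `t` the `t`-th
roots of unity in `F̄₂` are the powers of a primitive one `ζ`; writing `x = ζ^a`, `1 + x = ζ^b`,
the element `1 + g^a + g^b` vanishes at `g ↦ ζ` and is a zero divisor.
-/

open Polynomial

namespace CyclicGroupAlgebra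

variable (k : Type*) [Field k] (n : ℕ)

noncomputable def toCyclic : k[X] →ₐ[k] MonoidAlgebra k (Multiplicative (ZMod n)) :=
  aeval (MonoidAlgebra.of k _ (Multiplicative.ofAdd 1))

variable {k n}

lemma toCyclic_X_pow (j : ℕ) :
    toCyclic k n (X ^ j) = MonoidAlgebra.single (Multiplicative.ofAdd (j : ZMod n)) 1 := by
  rw [toCyclic, map_pow, aeval_X, MonoidAlgebra.of_apply, MonoidAlgebra.single_pow, one_pow,
    ← ofAdd_nsmul, nsmul_one]

lemma toCyclic_X_pow_sub_one : toCyclic k n (X ^ n - 1) = 0 := by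
  rw [map_sub, toCyclic_X_pow, ZMod.natCast_self, ofAdd_zero, map_one, MonoidAlgebra.one_def,
    sub_self]

variable [NeZero n]

lemma toCyclic_X_pow_val (g : Multiplicative (ZMod n)) :
    toCyclic k n (X ^ (Multiplicative.toAdd g).val) = MonoidAlgebra.single g 1 := by
  rw [toCyclic_X_pow, ZMod.natCast_zmod_val, ofAdd_toAdd]

lemma toCyclic_surjective : Function.Surjective (toCyclic k n) := by
  intro y
  induction y using MonoidAlgebra.induction_on with
  | of g => exact ⟨_, toCyclic_X_pow_val g⟩
  | add x y hx hy => exact (toCyclic k n).range.add_mem hx hy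
  | smul c x hx => exact (toCyclic k n).range.smul_mem hx c

lemma toCyclic_eq_zero_iff {P : k[X]} : toCyclic k n P = 0 ↔ X ^ n - 1 ∣ P := by
  -- `k[X]/(X^n - 1) → k[ℤ/nℤ]` is a surjection between `k`-spaces of dimension `n`.
  have hmonic : (X ^ n - C 1 : k[X]).Monic := monic_X_pow_sub_C 1 (NeZero.ne n)
  have : Module.Finite k (AdjoinRoot (X ^ n - C 1 : k[X])) := hmonic.finite_adjoinRoot
  let φ := AdjoinRoot.liftAlgHom (X ^ n - C 1)
    (Algebra.ofId k (MonoidAlgebra k (Multiplicative (ZMod n))))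
    (MonoidAlgebra.of k _ (Multiplicative.ofAdd 1))
    (by simpa [toCyclic] using toCyclic_X_pow_sub_one (k := k) (n := n))
  have hφ (P : k[X]) : φ (AdjoinRoot.mk _ P) = toCyclic k n P := rfl
  have hrank : Module.finrank k (AdjoinRoot (X ^ n - C 1 : k[X])) =
      Module.finrank k (MonoidAlgebra k (Multiplicative (ZMod n))) := by
    rw [(AdjoinRoot.powerBasis' hmonic).finrank, AdjoinRoot.powerBasis'_dim, natDegree_X_pow_sub_C,
      (MonoidAlgebra.coeffLinearEquiv k).finrank_eq, Module.finrank_finsupp_self,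
      Fintype.card_multiplicative, ZMod.card]
  have hinj : Function.Injective φ :=
    (LinearMap.injective_iff_surjective_of_finrank_eq_finrank hrank (f := φ.toLinearMap)).2
      fun y ↦ (toCyclic_surjective y).elim fun P hP ↦ ⟨AdjoinRoot.mk _ P, hP⟩
  rw [← hφ, ← map_zero φ, hinj.eq_iff, AdjoinRoot.mk_eq_zero, map_one]

lemma exists_ne_zero_toCyclic_mul_eq_zero_iff (P : k[X]) :
    (∃ β ≠ 0, toCyclic k n P * β = 0) ↔ ¬IsCoprime P (X ^ n - 1) := by
  classical
  have hf : (X ^ n - 1 : k[X]) ≠ 0 := X_pow_sub_C_ne_zero (Nat.pos_of_neZero n) 1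
  constructor
  · rintro ⟨β, hβ, hmul⟩ hcop
    obtain ⟨Q, rfl⟩ := toCyclic_surjective β
    rw [← map_mul, toCyclic_eq_zero_iff] at hmul
    exact hβ (toCyclic_eq_zero_iff.2 (hcop.symm.dvd_of_dvd_mul_left hmul))
  · intro hcop
    obtain ⟨P', hP'⟩ := EuclideanDomain.gcd_dvd_left P (X ^ n - 1)
    obtain ⟨Q, hQ⟩ := EuclideanDomain.gcd_dvd_right P (X ^ n - 1)
    refine ⟨toCyclic k n Q, fun hQ0 ↦ hcop ?_, ?_⟩
    · obtain ⟨c, hc⟩ := toCyclic_eq_zero_iff.1 hQ0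
      refine EuclideanDomain.gcd_isUnit_iff.1 (IsUnit.of_mul_eq_one c (mul_left_cancel₀ hf ?_))
      linear_combination (-EuclideanDomain.gcd P (X ^ n - 1)) * hc - hQ
    · rw [← map_mul, toCyclic_eq_zero_iff]
      exact ⟨P', by linear_combination Q * hP' - P' * hQ⟩

lemma exists_ne_zero_toCyclic_mul_eq_zero_iff_exists_root (K : Type*) [Field K] [IsAlgClosed K]
    [Algebra k K] (P : k[X]) :
    (∃ β ≠ 0, toCyclic k n P * β = 0) ↔ ∃ θ : K, θ ^ n = 1 ∧ aeval θ P = 0 := by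
  rw [exists_ne_zero_toCyclic_mul_eq_zero_iff, isCoprime_iff_aeval_ne_zero_of_isAlgClosed k K]
  simp [sub_eq_zero, and_comm]

end CyclicGroupAlgebra

open CyclicGroupAlgebra

lemma MonoidAlgebra.card_support_eq_three_iff {G : Type*} (α : MonoidAlgebra (ZMod 2) G) :
    α.coeff.support.card = 3 ↔ ∃ x y z : G, x ≠ y ∧ x ≠ z ∧ y ≠ z ∧
      α = MonoidAlgebra.single x 1 + MonoidAlgebra.single y 1 + MonoidAlgebra.single z 1 := by
  classical
  have hZ2 : ∀ c : ZMod 2, c = 0 ∨ c = 1 := by decide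
  rw [Finset.card_eq_three]
  refine exists₃_congr fun x y z ↦ and_congr_right fun hxy ↦ and_congr_right fun hxz ↦
    and_congr_right fun hyz ↦ ⟨fun hs ↦ ?_, fun hα ↦ ?_⟩
  · refine MonoidAlgebra.coeff_injective (Finsupp.ext fun g ↦ ?_)
    have hg := Finset.ext_iff.1 hs g
    rw [Finsupp.mem_support_iff] at hg
    rcases hZ2 (α.coeff g) with h | h <;>
    by_cases hgx : g = x <;> by_cases hgy : g = y <;> by_cases hgz : g = z <;>
      simp_all [MonoidAlgebra.coeff_add, Finsupp.single_apply, eq_comm]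
  · ext g
    rw [Finsupp.mem_support_iff, hα]
    by_cases hgx : g = x <;> by_cases hgy : g = y <;> by_cases hgz : g = z <;>
      simp_all [MonoidAlgebra.coeff_add, Finsupp.single_apply, eq_comm]

lemma pow_eq_one_of_pow_expChar_pow_mul_eq_one {R : Type*} [CommRing R] [IsReduced R] (p : ℕ)
    [ExpChar R p] {x : R} {k m : ℕ} (h : x ^ (p ^ k * m) = 1) : x ^ m = 1 :=
  iterateFrobenius_inj R p k (by rwa [iterateFrobenius_def, map_one, ← pow_mul, mul_comm])

lemma exists_one_add_pow_eq_one_of_trinomial_root {K : Type*} [Field K] [CharP K 2] {θ : K}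
    {n a b c : ℕ} (hn : n ≠ 0) (hθn : θ ^ n = 1) (hθ : θ ^ a + θ ^ b + θ ^ c = 0) :
    ∃ x : K, x ^ n = 1 ∧ (1 + x) ^ n = 1 := by
  have hθa : θ ^ a ≠ 0 := pow_ne_zero _ fun h ↦ by simp [h, zero_pow hn] at hθn
  have hpow (e : ℕ) : (θ ^ e) ^ n = 1 := by rw [pow_right_comm, hθn, one_pow]
  have hsum : 1 + θ ^ b / θ ^ a = θ ^ c / θ ^ a := by
    rw [one_add_div hθa, CharTwo.add_eq_zero.1 hθ]
  exact ⟨θ ^ b / θ ^ a, by rw [div_pow, hpow, hpow, div_one],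
    by rw [hsum, div_pow, hpow, hpow, div_one]⟩

lemma aeval_one_add_X_pow_eq_zero_and_iff {A : Type*} [CommRing A] [CharP A 2]
    [Algebra (ZMod 2) A] (t : ℕ) (x : A) :
    aeval x (1 + X ^ t : (ZMod 2)[X]) = 0 ∧ aeval x (1 + (1 + X) ^ t : (ZMod 2)[X]) = 0 ↔
      x ^ t = 1 ∧ (1 + x) ^ t = 1 := by
  simp only [map_add, map_one, map_pow, aeval_X, CharTwo.add_eq_zero, eq_comm (a := (1 : A))]

lemma one_lt_degree_gcd_iff {t : ℕ} (ht : t ≠ 0) :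
    1 < (EuclideanDomain.gcd (1 + X ^ t) (1 + (1 + X) ^ t) : (ZMod 2)[X]).degree ↔
      ∃ x : AlgebraicClosure (ZMod 2), x ^ t = 1 ∧ (1 + x) ^ t = 1 := by
  set g := (EuclideanDomain.gcd (1 + X ^ t) (1 + (1 + X) ^ t) : (ZMod 2)[X])
  have hg0 : g ≠ 0 := fun h ↦ by
    simpa [ht] using congrArg (eval 0) (EuclideanDomain.gcd_eq_zero_iff.1 h).1
  have hroot (r : ZMod 2) (hr : g.IsRoot r) : False := by
    have hr' := (aeval_one_add_X_pow_eq_zero_and_iff t r).1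
      ⟨eval_eq_zero_of_dvd_of_eval_eq_zero (EuclideanDomain.gcd_dvd_left _ _) hr,
        eval_eq_zero_of_dvd_of_eval_eq_zero (EuclideanDomain.gcd_dvd_right _ _) hr⟩
    fin_cases r
    · exact zero_ne_one ((zero_pow ht).symm.trans hr'.1)
    · exact zero_ne_one ((zero_pow ht).symm.trans hr'.2)
  have hdeg : 1 < g.degree ↔ ¬IsUnit g := by
    refine ⟨fun h hu ↦ by simp [isUnit_iff_degree_eq_zero.1 hu] at h, fun hu ↦ ?_⟩
    have hpos := natDegree_pos_iff_degree_pos.2 (degree_pos_of_ne_zero_of_nonunit hg0 hu)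
    have hne : g.natDegree ≠ 1 := fun h ↦
      (exists_root_of_degree_eq_one (by rw [degree_eq_natDegree hg0, h]; rfl)).elim hroot
    rw [degree_eq_natDegree hg0]
    exact_mod_cast (by omega : 1 < g.natDegree)
  rw [hdeg, EuclideanDomain.gcd_isUnit_iff,
    isCoprime_iff_aeval_ne_zero_of_isAlgClosed (ZMod 2) (AlgebraicClosure (ZMod 2))]
  simp only [not_forall, not_or, not_not, aeval_one_add_X_pow_eq_zero_and_iff]

section CyclicOverTwo

variable {n : ℕ} [NeZero n]

lemma exists_one_add_pow_eq_one_of_mul_eq_zero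
    {α β : MonoidAlgebra (ZMod 2) (Multiplicative (ZMod n))} (hα : α.coeff.support.card = 3)
    (hβ : β ≠ 0) (h : α * β = 0) :
    ∃ x : AlgebraicClosure (ZMod 2), x ^ n = 1 ∧ (1 + x) ^ n = 1 := by
  obtain ⟨x, y, z, -, -, -, rfl⟩ := (MonoidAlgebra.card_support_eq_three_iff α).1 hα
  obtain ⟨θ, hθn, hθ⟩ := (exists_ne_zero_toCyclic_mul_eq_zero_iff_exists_root
    (AlgebraicClosure (ZMod 2)) (X ^ (Multiplicative.toAdd x).val +
      X ^ (Multiplicative.toAdd y).val + X ^ (Multiplicative.toAdd z).val)).1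
    ⟨β, hβ, by simpa only [map_add, toCyclic_X_pow_val] using h⟩
  simp only [map_add, map_pow, aeval_X] at hθ
  exact exists_one_add_pow_eq_one_of_trinomial_root (NeZero.ne n) hθn hθ

lemma exists_card_support_eq_three_mul_eq_zero {t : ℕ} (ht : Odd t) (htn : t ∣ n)
    {x : AlgebraicClosure (ZMod 2)} (hx : x ^ t = 1) (hx1 : (1 + x) ^ t = 1) :
    ∃ α : MonoidAlgebra (ZMod 2) (Multiplicative (ZMod n)),
      α.coeff.support.card = 3 ∧ α ≠ 0 ∧ ∃ β, β ≠ 0 ∧ α * β = 0 := by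
  have : NeZero t := ⟨ht.pos.ne'⟩
  have : NeZero (t : ZMod 2) := ⟨ZMod.natCast_ne_zero_iff_odd.2 ht⟩
  obtain ⟨ζ, hζ⟩ := HasEnoughRootsOfUnity.exists_primitiveRoot (AlgebraicClosure (ZMod 2)) t
  obtain ⟨a, -, rfl⟩ := hζ.eq_pow_of_pow_eq_one hx
  obtain ⟨b, -, hb⟩ := hζ.eq_pow_of_pow_eq_one hx1
  have hζn : ζ ^ n = 1 := (hζ.pow_eq_one_iff_dvd n).2 htn
  have hpow_eq {i j : ℕ} (h : Multiplicative.ofAdd (i : ZMod n) = .ofAdd j) : ζ ^ i = ζ ^ j := by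
    rw [pow_eq_pow_mod i hζn, pow_eq_pow_mod j hζn,
      (ZMod.natCast_eq_natCast_iff' i j n).1 (Multiplicative.ofAdd.injective h)]
  have hx0 : ζ ^ a ≠ 0 := fun h ↦ by simp [h, zero_pow ht.pos.ne'] at hx
  have hx10 : 1 + ζ ^ a ≠ 0 := fun h ↦ by simp [h, zero_pow ht.pos.ne'] at hx1
  have hcard : (toCyclic (ZMod 2) n (X ^ 0 + X ^ a + X ^ b)).coeff.support.card = 3 := by
    rw [map_add, map_add, toCyclic_X_pow, toCyclic_X_pow, toCyclic_X_pow,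
      MonoidAlgebra.card_support_eq_three_iff]
    refine ⟨_, _, _, fun h ↦ ?_, fun h ↦ ?_, fun h ↦ ?_, rfl⟩ <;> have := hpow_eq h
    · rw [pow_zero] at this
      exact hx10 (by rw [← this, CharTwo.add_self_eq_zero])
    · rw [pow_zero, hb] at this
      exact hx0 (by simpa using this)
    · rw [hb] at this
      simp at this
  refine ⟨_, hcard, fun h ↦ by rw [h] at hcard; simp at hcard, ?_⟩
  refine (exists_ne_zero_toCyclic_mul_eq_zero_iff_exists_root (AlgebraicClosure (ZMod 2)) _).2
    ⟨ζ, hζn, ?_⟩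
  simp only [map_add, map_pow, aeval_X, pow_zero, map_one, hb, CharTwo.add_self_eq_zero]

end CyclicOverTwo

theorem support_three_zero_divisor_iff_trinomial_gcd
    (n : ℕ) (hn : 0 < n) :
    (∃ α : MonoidAlgebra (ZMod 2) (Multiplicative (ZMod n)),
        α.coeff.support.card = 3 ∧ α ≠ 0 ∧ ∃ β, β ≠ 0 ∧ α * β = 0) ↔
      ∃ t : ℕ, 0 < t ∧ Odd t ∧ t ∣ n ∧
        1 < (EuclideanDomain.gcd (1 + X ^ t) (1 + (1 + X) ^ t) : (ZMod 2)[X]).degree := by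
  have : NeZero n := ⟨hn.ne'⟩
  constructor
  · rintro ⟨α, hα, -, β, hβ, hαβ⟩
    obtain ⟨x, hx, hx1⟩ := exists_one_add_pow_eq_one_of_mul_eq_zero hα hβ hαβ
    obtain ⟨k, t, ht, rfl⟩ := Nat.exists_eq_two_pow_mul_odd hn.ne'
    exact ⟨t, ht.pos, ht, Dvd.intro_left _ rfl, (one_lt_degree_gcd_iff ht.pos.ne').2
      ⟨x, pow_eq_one_of_pow_expChar_pow_mul_eq_one 2 hx,
        pow_eq_one_of_pow_expChar_pow_mul_eq_one 2 hx1⟩⟩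
  · rintro ⟨t, ht, hodd, htn, hdeg⟩
    obtain ⟨x, hx, hx1⟩ := (one_lt_degree_gcd_iff ht.ne').1 hdeg
    exact exists_card_support_eq_three_mul_eq_zero hodd htn hx hx1
end

section
/- Let G be a group, x ∈ G an element of finite order n > 2, and let α ∈ F₂[G] be equal to 1 + x + x^{−1} or to 1 + x + x². Suppose αβ = 0 for some nonzero β ∈ F₂[G] with 1 ∈ supp(β), where |supp(β)| is minimal among all nonzero γ ∈ F₂[G] with αγ = 0. Then β = β′ or β = β′·x^{−1}, where β′ := Σ_{i=0}^{k} x^{s_i} with k = |supp(β)| − 1, s₀ = 0, s₁ = 1, and s_i = s_{i−2} + 3 for all i ∈ {2, 3, …, k}. -/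
/-!
Left multiplication by the unit `x` turns `1 + x + x⁻¹` into `1 + x + x²`, so both elements have
the same annihilators. Multiplication by an element supported on `⟨x⟩` commutes with restricting
to `⟨x⟩`, so a minimal annihilator `β` with `1 ∈ supp β` is supported on `⟨x⟩`. There
`(1 + x + x²) β = 0` says that `c j = β(x ^ j)` satisfies `c (j + 2) = c (j + 1) + c j`, a
Fibonacci sequence mod 2: it is 3-periodic with exactly one zero per period, and being also
periodic mod `ord x`, it forces `3 ∣ ord x`. If `β(x) = 1` the zeros are at `j ≡ 2 (mod 3)`, which
is `β = β'`. Otherwise `β x` satisfies the same hypotheses with `(β x)(x) = β(1) = 1`, so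
`β x = β'`.
-/

open Finset MonoidAlgebra Subgroup

/-- The paper's `s i`: the `i`-th natural number not congruent to `2` mod `3`. -/
def nthNonTwoModThree (i : ℕ) : ℕ := 3 * (i / 2) + i % 2

lemma nthNonTwoModThree_injective : Function.Injective nthNonTwoModThree := by
  intro i j h
  unfold nthNonTwoModThree at h
  omega

lemma image_nthNonTwoModThree_range (m : ℕ) :
    (range (2 * m)).image nthNonTwoModThree = (range (3 * m)).filter (· % 3 ≠ 2) := by
  ext j
  simp only [mem_image, mem_filter, mem_range, nthNonTwoModThree]
  constructor
  · rintro ⟨i, hi, rfl⟩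
    omega
  · rintro ⟨hj, hj2⟩
    exact ⟨2 * (j / 3) + j % 3, by omega, by omega⟩

lemma three_dvd_of_periodic_ite {n : ℕ}
    (h : Function.Periodic (fun j : ℕ => if j % 3 = 2 then (0 : ZMod 2) else 1) n) : 3 ∣ n := by
  have h2 := h 2
  simp only [Nat.reduceMod, ite_true] at h2
  split_ifs at h2 with h
  · omega
  · exact absurd h2 one_ne_zero

lemma periodic_three_of_add_two {R : Type*} [Ring R] [CharP R 2] {f : ℕ → R}
    (hf : ∀ j, f (j + 2) = f (j + 1) + f j) : Function.Periodic f 3 := fun j => by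
  rw [hf (j + 1), hf j, add_right_comm, CharTwo.add_self_eq_zero, zero_add]

section

variable {k G : Type*} [Group G]

variable (k) in
noncomputable def oneAddXAddXSq [Semiring k] (x : G) : k[G] := 1 + single x 1 + single (x ^ 2) 1

lemma one_add_single_add_single_inv_mul_eq_zero_iff [Semiring k] (x : G) (γ : k[G]) :
    (1 + single x 1 + single x⁻¹ 1) * γ = 0 ↔ oneAddXAddXSq k x * γ = 0 := by
  have hunit : IsUnit (single x (1 : k)) := (Group.isUnit x).map (of k G)
  have hmul : single x 1 * (1 + single x 1 + single x⁻¹ 1) = oneAddXAddXSq k x := by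
    simp only [oneAddXAddXSq, mul_add, mul_one, single_mul_single, mul_inv_cancel, sq,
      ← one_def]
    abel
  rw [← hmul, mul_assoc, hunit.mul_right_eq_zero]

lemma mem_zpowers_of_mem_support_oneAddXAddXSq [Semiring k] {x g : G}
    (hg : g ∈ (oneAddXAddXSq k x).coeff.support) : g ∈ zpowers x := by
  contrapose! hg
  have h1 : (1 : G) ≠ g := fun h => hg (h ▸ one_mem _)
  have hx : x ≠ g := fun h => hg (h ▸ mem_zpowers x)
  have hx2 : x ^ 2 ≠ g := fun h => hg (h ▸ pow_mem (mem_zpowers x) 2)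
  simp [oneAddXAddXSq, one_def, h1, hx, hx2]

lemma coeff_oneAddXAddXSq_mul [Semiring k] (x y : G) (γ : k[G]) :
    (oneAddXAddXSq k x * γ).coeff (x ^ 2 * y) =
      γ.coeff (x ^ 2 * y) + γ.coeff (x * y) + γ.coeff y := by
  simp [oneAddXAddXSq, add_mul, sq, mul_assoc]

lemma coeff_sq_mul_of_oneAddXAddXSq_mul_eq_zero [Ring k] [CharP k 2] {x : G} {γ : k[G]}
    (hγ : oneAddXAddXSq k x * γ = 0) (y : G) :
    γ.coeff (x ^ 2 * y) = γ.coeff (x * y) + γ.coeff y := by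
  have h := coeff_oneAddXAddXSq_mul x y γ
  rw [hγ, coeff_zero, Finsupp.zero_apply, add_assoc, eq_comm] at h
  rw [eq_neg_of_add_eq_zero_left h, CharTwo.neg_eq]

lemma mul_ofCoeff_filter_mem [Semiring k] {H : Subgroup G} [DecidablePred (· ∈ H)] {α : k[G]}
    (hα : ∀ a ∈ α.coeff.support, a ∈ H) (γ : k[G]) :
    α * ofCoeff (γ.coeff.filter (· ∈ H)) = ofCoeff ((α * γ).coeff.filter (· ∈ H)) := by
  ext y
  simp only [Finsupp.filter_apply, coeff_mul_apply_left]
  split_ifs with hy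
  · refine Finset.sum_congr rfl fun a ha => ?_
    beta_reduce
    rw [if_pos ((H.mul_mem_cancel_left (H.inv_mem (hα a ha))).mpr hy)]
  · refine Finset.sum_eq_zero fun a ha => ?_
    beta_reduce
    rw [if_neg (mt (H.mul_mem_cancel_left (H.inv_mem (hα a ha))).mp hy), mul_zero]

lemma mem_of_mem_support_of_minimal [Semiring k] {H : Subgroup G} {α β : k[G]}
    (hα : ∀ a ∈ α.coeff.support, a ∈ H) (hβ1 : 1 ∈ β.coeff.support) (hαβ : α * β = 0)
    (hmin : ∀ γ : k[G], γ ≠ 0 → α * γ = 0 → #β.coeff.support ≤ #γ.coeff.support) :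
    ∀ g ∈ β.coeff.support, g ∈ H := by
  classical
  set βH : k[G] := ofCoeff (β.coeff.filter (· ∈ H))
  have hαβH : α * βH = 0 := by
    rw [mul_ofCoeff_filter_mem hα, hαβ, coeff_zero, Finsupp.filter_zero, ofCoeff_zero]
  have hβH : βH ≠ 0 := fun h => by
    have h1 : βH.coeff 1 = β.coeff 1 := Finsupp.filter_apply_pos _ _ (one_mem H)
    rw [h, coeff_zero, Finsupp.zero_apply] at h1
    exact Finsupp.mem_support_iff.mp hβ1 h1.symm
  have hcard := hmin βH hβH hαβH
  rw [coeff_ofCoeff, Finsupp.support_filter] at hcard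
  exact card_filter_eq_iff.mp (le_antisymm (card_filter_le _ _) hcard)

lemma support_eq_image_filter [Semiring k] [DecidableEq k] [DecidableEq G] {x : G}
    (hx : IsOfFinOrder x) {γ : k[G]} (hγ : ∀ g ∈ γ.coeff.support, g ∈ zpowers x) :
    γ.coeff.support =
      ((range (orderOf x)).filter fun j => γ.coeff (x ^ j) ≠ 0).image (x ^ ·) := by
  ext g
  constructor
  · intro hg
    obtain ⟨j, hj, rfl⟩ := mem_image.mp (hx.mem_zpowers_iff_mem_range_orderOf.mp (hγ g hg))
    exact mem_image_of_mem _ (mem_filter.mpr ⟨hj, Finsupp.mem_support_iff.mp hg⟩)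
  · intro hg
    obtain ⟨j, hj, rfl⟩ := mem_image.mp hg
    exact Finsupp.mem_support_iff.mpr (mem_filter.mp hj).2

lemma coeff_pow_eq_ite_of_oneAddXAddXSq_mul_eq_zero {x : G} {β : (ZMod 2)[G]}
    (hβ : oneAddXAddXSq (ZMod 2) x * β = 0) (h0 : β.coeff 1 = 1) (h1 : β.coeff x = 1) (j : ℕ) :
    β.coeff (x ^ j) = if j % 3 = 2 then 0 else 1 := by
  set f : ℕ → ZMod 2 := fun j => β.coeff (x ^ j)
  have hrec : ∀ j, f (j + 2) = f (j + 1) + f j := fun j => by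
    simpa only [f, ← pow_add, ← pow_succ', add_comm 2 j] using
      coeff_sq_mul_of_oneAddXAddXSq_mul_eq_zero hβ (x ^ j)
  have hf0 : f 0 = 1 := by simpa [f] using h0
  have hf1 : f 1 = 1 := by simpa [f] using h1
  have hf2 : f 2 = 0 := by rw [hrec 0, hf0, hf1]; rfl
  change f j = _
  rw [← (periodic_three_of_add_two hrec).map_mod_nat j]
  rcases (by omega : j % 3 = 0 ∨ j % 3 = 1 ∨ j % 3 = 2) with h | h | h <;> simp [h, hf0, hf1, hf2]

lemma eq_sum_nthNonTwoModThree {x : G} (hx : IsOfFinOrder x) {β : (ZMod 2)[G]}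
    (hβ : oneAddXAddXSq (ZMod 2) x * β = 0) (hsupp : ∀ g ∈ β.coeff.support, g ∈ zpowers x)
    (h0 : β.coeff 1 = 1) (h1 : β.coeff x = 1) :
    β = ∑ i ∈ range #β.coeff.support, single (x ^ nthNonTwoModThree i) 1 := by
  classical
  have hcoeff := coeff_pow_eq_ite_of_oneAddXAddXSq_mul_eq_zero hβ h0 h1
  obtain ⟨m, hm⟩ : 3 ∣ orderOf x := three_dvd_of_periodic_ite fun j => by
    simp only [← hcoeff, pow_add, pow_orderOf_eq_one, mul_one]
  have hfilter : ((range (orderOf x)).filter fun j => β.coeff (x ^ j) ≠ 0) =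
      (range (2 * m)).image nthNonTwoModThree := by
    rw [image_nthNonTwoModThree_range, hm]
    refine filter_congr fun j _ => ?_
    rw [hcoeff]
    split_ifs <;> simp_all
  have hinj : Set.InjOn (fun i => x ^ nthNonTwoModThree i) (range (2 * m)) :=
    pow_injOn_Iio_orderOf.comp nthNonTwoModThree_injective.injOn fun i hi => by
      simp only [coe_range, Set.mem_Iio, hm, nthNonTwoModThree] at hi ⊢
      omega
  have hsupp_eq : β.coeff.support = (range (2 * m)).image (fun i => x ^ nthNonTwoModThree i) := by
    rw [support_eq_image_filter hx hsupp, hfilter, image_image]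
    rfl
  rw [hsupp_eq, card_image_of_injOn hinj, card_range]
  conv_lhs => rw [← sum_coeff_single β]
  rw [Finsupp.sum, hsupp_eq, sum_image hinj]
  refine sum_congr rfl fun i hi => ?_
  rw [hcoeff, if_neg]
  simp only [mem_range, nthNonTwoModThree] at hi ⊢
  omega

lemma eq_sum_nthNonTwoModThree_mul_single_inv {x : G} (hx : IsOfFinOrder x) {β : (ZMod 2)[G]}
    (hβ : oneAddXAddXSq (ZMod 2) x * β = 0) (hsupp : ∀ g ∈ β.coeff.support, g ∈ zpowers x)
    (h0 : β.coeff 1 = 1) (h1 : β.coeff x = 0) :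
    β = (∑ i ∈ range #β.coeff.support, single (x ^ nthNonTwoModThree i) 1) * single x⁻¹ 1 := by
  have hsupp_mul : (β * single x 1).coeff.support = β.coeff.support.map (mulRightEmbedding x) :=
    support_coeff_mul_single _ _ (by simp) x
  have hinv : β.coeff x⁻¹ = 1 := by
    have h := coeff_sq_mul_of_oneAddXAddXSq_mul_eq_zero hβ x⁻¹
    rw [sq, mul_inv_cancel_right, mul_inv_cancel, h1, h0] at h
    rw [eq_neg_of_add_eq_zero_right h.symm, CharTwo.neg_eq]
  have hshift := eq_sum_nthNonTwoModThree hx (β := β * single x 1)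
    (by rw [← mul_assoc, hβ, zero_mul])
    (fun g hg => by
      rw [hsupp_mul] at hg
      obtain ⟨a, ha, rfl⟩ := mem_map.mp hg
      exact mul_mem (hsupp a ha) (mem_zpowers x))
    (by rw [coeff_mul_single_apply, one_mul, hinv, mul_one])
    (by rw [coeff_mul_single_apply, mul_inv_cancel, h0, mul_one])
  rw [hsupp_mul, card_map] at hshift
  rw [← hshift, mul_assoc, single_mul_single, mul_inv_cancel, one_mul, ← one_def, mul_one]

end

theorem minimal_annihilator_of_one_add_x_add_x_sq_general
    {G : Type*} [Group G] (x : G) (n : ℕ) (hn : 2 < n) (hx : orderOf x = n)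
    (α β : MonoidAlgebra (ZMod 2) G)
    (hα : α = 1 + MonoidAlgebra.single x 1 + MonoidAlgebra.single x⁻¹ 1 ∨
          α = 1 + MonoidAlgebra.single x 1 + MonoidAlgebra.single (x ^ 2) 1)
    (hβ1 : (1 : G) ∈ β.coeff.support) (hαβ : α * β = 0)
    (hmin : ∀ γ : MonoidAlgebra (ZMod 2) G, γ ≠ 0 → α * γ = 0 →
      β.coeff.support.card ≤ γ.coeff.support.card) :
    ∃ s : ℕ → ℕ, s 0 = 0 ∧ s 1 = 1 ∧
      (∀ i, 2 ≤ i → i ≤ β.coeff.support.card - 1 → s i = s (i - 2) + 3) ∧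
      (β = ∑ i ∈ Finset.range β.coeff.support.card, MonoidAlgebra.single (x ^ s i) (1 : ZMod 2) ∨
       β = (∑ i ∈ Finset.range β.coeff.support.card,
              MonoidAlgebra.single (x ^ s i) (1 : ZMod 2)) * MonoidAlgebra.single x⁻¹ 1) := by
  have hann : ∀ γ, α * γ = 0 ↔ oneAddXAddXSq (ZMod 2) x * γ = 0 := by
    rcases hα with rfl | rfl
    · exact one_add_single_add_single_inv_mul_eq_zero_iff x
    · exact fun _ => Iff.rfl
  simp only [hann] at hαβ hmin
  have hsupp := mem_of_mem_support_of_minimal (fun _ => mem_zpowers_of_mem_support_oneAddXAddXSq)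
    hβ1 hαβ hmin
  have hfin : IsOfFinOrder x := orderOf_pos_iff.mp (by omega)
  have h0 : β.coeff 1 = 1 :=
    (by decide : ∀ a : ZMod 2, a ≠ 0 → a = 1) _ (Finsupp.mem_support_iff.mp hβ1)
  refine ⟨nthNonTwoModThree, rfl, rfl, fun i hi _ => by unfold nthNonTwoModThree; omega, ?_⟩
  rcases (by decide : ∀ a : ZMod 2, a = 0 ∨ a = 1) (β.coeff x) with h1 | h1
  · exact .inr (eq_sum_nthNonTwoModThree_mul_single_inv hfin hαβ hsupp h0 h1)
  · exact .inl (eq_sum_nthNonTwoModThree hfin hαβ hsupp h0 h1)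

theorem minimal_annihilator_of_one_add_x_add_x_sq
    {G : Type*} [Group G] (x : G) (n : ℕ) (hn : 2 < n) (hx : orderOf x = n)
    (α β : MonoidAlgebra (ZMod 2) G)
    (hα : α = 1 + MonoidAlgebra.single x 1 + MonoidAlgebra.single x⁻¹ 1 ∨
          α = 1 + MonoidAlgebra.single x 1 + MonoidAlgebra.single (x ^ 2) 1)
    (hβ : β ≠ 0) (hβ1 : (1 : G) ∈ β.coeff.support) (hαβ : α * β = 0)
    (hmin : ∀ γ : MonoidAlgebra (ZMod 2) G, γ ≠ 0 → α * γ = 0 →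
      β.coeff.support.card ≤ γ.coeff.support.card) :
    ∃ s : ℕ → ℕ, s 0 = 0 ∧ s 1 = 1 ∧
      (∀ i, 2 ≤ i → i ≤ β.coeff.support.card - 1 → s i = s (i - 2) + 3) ∧
      (β = ∑ i ∈ Finset.range β.coeff.support.card, MonoidAlgebra.single (x ^ s i) (1 : ZMod 2) ∨
       β = (∑ i ∈ Finset.range β.coeff.support.card,
              MonoidAlgebra.single (x ^ s i) (1 : ZMod 2)) * MonoidAlgebra.single x⁻¹ 1) :=
  minimal_annihilator_of_one_add_x_add_x_sq_general x n hn hx α β hα hβ1 hαβ hmin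
end

section
/- Let G be a group and x ∈ G an element of finite order n > 2. If the element α ∈ F₂[G] equal to 1 + x + x³ or to 1 + x² + x³ is a zero divisor in F₂[G], then n is a multiple of 7. -/
open Polynomial

/-! Let `y` be the image of `x` in `F₂[G]`, so that `α = p(y)` with `p = X³ + X + 1` or
`p = X³ + X² + 1`, and `yⁿ = 1`. Both trinomials divide `X⁷ - 1` and are coprime to `X - 1`.
Since `X^gcd(m,n) - 1` lies in the ideal generated by `Xᵐ - 1` and `Xⁿ - 1`, if `7 ∤ n` then
`p` is coprime to `Xⁿ - 1`, so a Bézout identity `u p + v (Xⁿ - 1) = 1` evaluated at `y`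
exhibits `α` as a unit of `F₂[G]`, which is not a zero divisor. -/

lemma pow_gcd_sub_one_mem {R : Type*} [CommRing R] {I : Ideal R} {a : R} {m n : ℕ}
    (hm : a ^ m - 1 ∈ I) (hn : a ^ n - 1 ∈ I) : a ^ Nat.gcd m n - 1 ∈ I := by
  induction m, n using Nat.gcd.induction with
  | H0 n => simpa using hn
  | H1 m n _ ih =>
    rw [Nat.gcd_rec]
    refine ih ?_ hm
    have hmul : a ^ m - 1 ∣ a ^ (m * (n / m)) - 1 := by
      simpa [pow_mul] using sub_dvd_pow_sub_pow (a ^ m) 1 (n / m)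
    have hsplit : a ^ (n % m) - 1 = a ^ n - 1 - a ^ (n % m) * (a ^ (m * (n / m)) - 1) := by
      rw [mul_sub, ← pow_add, Nat.mod_add_div]
      ring
    rw [hsplit]
    exact I.sub_mem hn (I.mul_mem_left _ (I.mem_of_dvd hmul hm))

lemma isCoprime_pow_sub_one_of_dvd_pow_sub_one {R : Type*} [CommRing R] {p a : R} {m n : ℕ}
    (hmn : m.Coprime n) (hpm : p ∣ a ^ m - 1) (hp : IsCoprime p (a - 1)) :
    IsCoprime p (a ^ n - 1) := by
  set I := Ideal.span {p, a ^ n - 1}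
  have hpI : p ∈ I := Ideal.subset_span (by simp)
  have ha : a - 1 ∈ I := by
    simpa [hmn.gcd_eq_one] using
      pow_gcd_sub_one_mem (n := n) (I.mem_of_dvd hpm hpI) (Ideal.subset_span (by simp))
  obtain ⟨u, v, huv⟩ := hp
  have h1 : (1 : R) ∈ I := huv ▸ I.add_mem (I.mul_mem_left u hpI) (I.mul_mem_left v ha)
  exact Ideal.mem_span_pair.mp h1

lemma isUnit_aeval_of_isCoprime_X_pow_sub_one {R A : Type*} [CommRing R] [Ring A] [Algebra R A]
    {a : A} {n : ℕ} (ha : a ^ n = 1) {p : R[X]} (hp : IsCoprime p (X ^ n - 1)) :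
    IsUnit (aeval a p) := by
  obtain ⟨u, v, huv⟩ := hp
  have hinv : aeval a u * aeval a p = 1 := by
    simpa [ha] using congrArg (aeval a) huv
  exact ⟨⟨_, _, by rwa [← map_mul, mul_comm, map_mul], hinv⟩, rfl⟩

lemma isCoprime_X_pow_sub_one_of_not_seven_dvd {R : Type*} [CommRing R] {p : R[X]} {n : ℕ}
    (hp7 : p ∣ X ^ 7 - 1) (hp1 : IsCoprime p (X - 1)) (hn : ¬ 7 ∣ n) :
    IsCoprime p (X ^ n - 1) :=
  isCoprime_pow_sub_one_of_dvd_pow_sub_one ((Nat.prime_seven.coprime_iff_not_dvd).mpr hn) hp7 hp1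

lemma X_pow_three_add_X_add_one_dvd : (X ^ 3 + X + 1 : (ZMod 2)[X]) ∣ X ^ 7 - 1 :=
  ⟨X ^ 4 + X ^ 2 + X + 1, by ring_nf; reduce_mod_char⟩

lemma isCoprime_X_pow_three_add_X_add_one : IsCoprime (X ^ 3 + X + 1 : (ZMod 2)[X]) (X - 1) :=
  ⟨1, X ^ 2 + X, by ring_nf; reduce_mod_char⟩

lemma X_pow_three_add_X_sq_add_one_dvd : (X ^ 3 + X ^ 2 + 1 : (ZMod 2)[X]) ∣ X ^ 7 - 1 :=
  ⟨X ^ 4 + X ^ 3 + X ^ 2 + 1, by ring_nf; reduce_mod_char⟩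

lemma isCoprime_X_pow_three_add_X_sq_add_one : IsCoprime (X ^ 3 + X ^ 2 + 1 : (ZMod 2)[X]) (X - 1) :=
  ⟨1, X ^ 2, by ring_nf; reduce_mod_char⟩

theorem order_multiple_of_seven_of_zero_divisor_trinomial_deg_three_general
    {G : Type*} [Group G] (x : G) (n : ℕ) (hx : orderOf x = n)
    (α : MonoidAlgebra (ZMod 2) G)
    (hα : α = 1 + MonoidAlgebra.single x 1 + MonoidAlgebra.single (x ^ 3) 1 ∨
          α = 1 + MonoidAlgebra.single (x ^ 2) 1 + MonoidAlgebra.single (x ^ 3) 1)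
    (hzd : α ≠ 0 ∧ ∃ β : MonoidAlgebra (ZMod 2) G, β ≠ 0 ∧ α * β = 0) :
    7 ∣ n := by
  by_contra h7
  obtain ⟨-, β, hβ, hαβ⟩ := hzd
  set y : MonoidAlgebra (ZMod 2) G := MonoidAlgebra.single x 1
  have hyn : y ^ n = 1 := by
    rw [MonoidAlgebra.single_pow, one_pow, ← hx, pow_orderOf_eq_one, MonoidAlgebra.one_def]
  obtain ⟨p, hp, rfl⟩ : ∃ p : (ZMod 2)[X], IsCoprime p (X ^ n - 1) ∧ aeval y p = α := by
    rcases hα with rfl | rfl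
    · refine ⟨X ^ 3 + X + 1, isCoprime_X_pow_sub_one_of_not_seven_dvd
        X_pow_three_add_X_add_one_dvd isCoprime_X_pow_three_add_X_add_one h7, ?_⟩
      simp only [map_add, map_pow, map_one, aeval_X, MonoidAlgebra.single_pow, one_pow, y]
      abel
    · refine ⟨X ^ 3 + X ^ 2 + 1, isCoprime_X_pow_sub_one_of_not_seven_dvd
        X_pow_three_add_X_sq_add_one_dvd isCoprime_X_pow_three_add_X_sq_add_one h7, ?_⟩
      simp only [map_add, map_pow, map_one, aeval_X, MonoidAlgebra.single_pow, one_pow, y]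
      abel
  exact hβ ((isUnit_aeval_of_isCoprime_X_pow_sub_one hyn hp).mul_right_eq_zero.mp hαβ)

theorem order_multiple_of_seven_of_zero_divisor_trinomial_deg_three
    {G : Type*} [Group G] (x : G) (n : ℕ) (hn : 2 < n) (hx : orderOf x = n)
    (α : MonoidAlgebra (ZMod 2) G)
    (hα : α = 1 + MonoidAlgebra.single x 1 + MonoidAlgebra.single (x ^ 3) 1 ∨
          α = 1 + MonoidAlgebra.single (x ^ 2) 1 + MonoidAlgebra.single (x ^ 3) 1)
    (hzd : α ≠ 0 ∧ ∃ β : MonoidAlgebra (ZMod 2) G, β ≠ 0 ∧ α * β = 0) :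
    7 ∣ n :=
  order_multiple_of_seven_of_zero_divisor_trinomial_deg_three_general x n hx α hα hzd
end

section
/- Let G be a group and x ∈ G an element of finite order n > 2. If the element α ∈ F₂[G] equal to one of 1 + x² + x^{n−1}, 1 + x^{n−3} + x^{n−2}, 1 + x + x^{n−2}, or 1 + x^{n−3} + x^{n−1} is a zero divisor in F₂[G], then n is a multiple of 7. -/
/-!
Put `u = x ∈ F₂[G]`, so that `uⁿ = 1`. Multiplying each of the four elements by a suitable power
of `u` turns it into `1 + u + u³` or `1 + u² + u³`, and over `F₂` both divide `1 + u⁷`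
(`x⁷ - 1 = (x - 1)(x³ + x + 1)(x³ + x² + 1)` in `F₂[x]`). Hence a nonzero `β` killed by `α`
satisfies `u⁷β = β` as well as `uⁿβ = β`, so the period of `β` under left multiplication by `u`
divides both `7` and `n`. If it were `1`, then `uβ = β` and the trinomial would act on `β` as
`1 + 1 + 1 = 1`, forcing `β = 0`; so it is `7`, and `7 ∣ n`.
-/

theorem pow_mul_pow_sub_of_pow_eq_one {M : Type*} [Monoid M] {u : M} {n j k : ℕ}
    (hun : u ^ n = 1) (hjk : j ≤ k) (hjn : j ≤ n) : u ^ k * u ^ (n - j) = u ^ (k - j) :=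
  calc u ^ k * u ^ (n - j) = u ^ (k - j) * (u ^ j * u ^ (n - j)) := by
        rw [← mul_assoc, pow_sub_mul_pow u hjk]
    _ = u ^ (k - j) := by rw [pow_mul_pow_sub u hjn, hun, mul_one]

theorem exists_pow_mul_eq_trinomial {R : Type*} [Semiring R] {u α : R} {n : ℕ} (hn : 2 < n)
    (hun : u ^ n = 1)
    (hα : α = 1 + u ^ 2 + u ^ (n - 1) ∨ α = 1 + u ^ (n - 3) + u ^ (n - 2) ∨
      α = 1 + u + u ^ (n - 2) ∨ α = 1 + u ^ (n - 3) + u ^ (n - 1)) :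
    ∃ k, u ^ k * α = 1 + u + u ^ 3 ∨ u ^ k * α = 1 + u ^ 2 + u ^ 3 := by
  have cancel {j k : ℕ} (hjk : j ≤ k) (hj : j ≤ 3) : u ^ k * u ^ (n - j) = u ^ (k - j) :=
    pow_mul_pow_sub_of_pow_eq_one hun hjk (by omega)
  rcases hα with rfl | rfl | rfl | rfl
  · refine ⟨1, Or.inl ?_⟩
    rw [mul_add, mul_add, mul_one, ← pow_add, cancel le_rfl (by norm_num)]
    norm_num
    abel
  · refine ⟨3, Or.inl ?_⟩
    rw [mul_add, mul_add, mul_one, cancel le_rfl le_rfl, cancel (by norm_num) (by norm_num)]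
    norm_num
    abel
  · refine ⟨2, Or.inr ?_⟩
    rw [mul_add, mul_add, mul_one, ← pow_succ, cancel le_rfl (by norm_num)]
    norm_num
    abel
  · refine ⟨3, Or.inr ?_⟩
    rw [mul_add, mul_add, mul_one, cancel le_rfl le_rfl, cancel (by norm_num) (by norm_num)]
    norm_num
    abel

section CharTwo

variable {R : Type*} [Ring R] [CharP R 2]

theorem one_add_pow_seven_eq_mul_one_add_add_pow_three (u : R) :
    1 + u ^ 7 = (1 + u + u ^ 2 + u ^ 4) * (1 + u + u ^ 3) := by
  noncomm_ring
  simp [CharTwo.two_eq_zero]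

theorem one_add_pow_seven_eq_mul_one_add_sq_add_pow_three (u : R) :
    1 + u ^ 7 = (1 + u ^ 2 + u ^ 3 + u ^ 4) * (1 + u ^ 2 + u ^ 3) := by
  noncomm_ring
  simp [CharTwo.two_eq_zero]

theorem pow_seven_mul_eq_self_of_trinomial_mul_eq_zero {u β : R}
    (h : (1 + u + u ^ 3) * β = 0 ∨ (1 + u ^ 2 + u ^ 3) * β = 0) : u ^ 7 * β = β := by
  have h7 : (1 + u ^ 7) * β = 0 := by
    rcases h with h | h
    · rw [one_add_pow_seven_eq_mul_one_add_add_pow_three, mul_assoc, h, mul_zero]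
    · rw [one_add_pow_seven_eq_mul_one_add_sq_add_pow_three, mul_assoc, h, mul_zero]
  rwa [add_mul, one_mul, CharTwo.add_eq_zero, eq_comm] at h7

theorem eq_zero_of_trinomial_mul_eq_zero_of_mul_eq_self {u β : R} {a b : ℕ}
    (h : (1 + u ^ a + u ^ b) * β = 0) (hu : u * β = β) : β = 0 := by
  have hpow (k : ℕ) : u ^ k * β = β :=
    (MulAction.stabilizerSubmonoid R β).pow_mem (MulAction.mem_stabilizerSubmonoid_iff.mpr hu) k
  rwa [add_mul, add_mul, one_mul, hpow, hpow, CharTwo.add_cancel_right] at h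

end CharTwo

theorem order_multiple_of_seven_of_zero_divisor_trinomial_variants
    {G : Type*} [Group G] (x : G) (n : ℕ) (hn : 2 < n) (hx : orderOf x = n)
    (α : MonoidAlgebra (ZMod 2) G)
    (hα : α = 1 + MonoidAlgebra.single (x ^ 2) 1 + MonoidAlgebra.single (x ^ (n - 1)) 1 ∨
          α = 1 + MonoidAlgebra.single (x ^ (n - 3)) 1 + MonoidAlgebra.single (x ^ (n - 2)) 1 ∨
          α = 1 + MonoidAlgebra.single x 1 + MonoidAlgebra.single (x ^ (n - 2)) 1 ∨
          α = 1 + MonoidAlgebra.single (x ^ (n - 3)) 1 + MonoidAlgebra.single (x ^ (n - 1)) 1)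
    (hzd : α ≠ 0 ∧ ∃ β : MonoidAlgebra (ZMod 2) G, β ≠ 0 ∧ α * β = 0) :
    7 ∣ n := by
  obtain ⟨-, β, hβ, hαβ⟩ := hzd
  have : CharP (MonoidAlgebra (ZMod 2) G) 2 := charP_of_injective_algebraMap' (ZMod 2) 2
  set u := MonoidAlgebra.single x (1 : ZMod 2)
  have hpow (k : ℕ) : MonoidAlgebra.single (x ^ k) (1 : ZMod 2) = u ^ k := by
    rw [MonoidAlgebra.single_pow, one_pow]
  have hun : u ^ n = 1 := by rw [← hpow, ← hx, pow_orderOf_eq_one, MonoidAlgebra.one_def]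
  simp only [hpow] at hα
  obtain ⟨k, hk⟩ := exists_pow_mul_eq_trinomial hn hun hα
  have hT : (1 + u + u ^ 3) * β = 0 ∨ (1 + u ^ 2 + u ^ 3) * β = 0 := by
    rcases hk with hk | hk <;> [left; right] <;> rw [← hk, mul_assoc, hαβ, mul_zero]
  have hdvd7 : MulAction.period u β ∣ 7 :=
    MulAction.pow_smul_eq_iff_period_dvd.mp (pow_seven_mul_eq_self_of_trinomial_mul_eq_zero hT)
  have hdvdn : MulAction.period u β ∣ n :=
    MulAction.pow_smul_eq_iff_period_dvd.mp (by rw [smul_eq_mul, hun, one_mul])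
  rcases (Nat.dvd_prime Nat.prime_seven).mp hdvd7 with hone | hseven
  · refine absurd ?_ hβ
    have huβ : u * β = β := MulAction.period_eq_one_iff.mp hone
    rcases hT with hT | hT
    · exact eq_zero_of_trinomial_mul_eq_zero_of_mul_eq_self (a := 1) (b := 3) (by rwa [pow_one]) huβ
    · exact eq_zero_of_trinomial_mul_eq_zero_of_mul_eq_self hT huβ
  · rwa [hseven] at hdvdn
end

section
/- Let G be a group and x ∈ G. The element 1 + x + x² of the group algebra F₂[G] is a zero divisor if and only if x has finite order divisible by 3. -/
/-!
Over any ring, `(1 - x)(1 + x + x²) = 1 - x³`. So if `(1 + x + x²)β = 0` with `β ≠ 0`, then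
`x³β = β`: the finite support of `β` is stable under translation by `x³`, which forces `x` to have
finite order. If moreover `3 ∤ ord x`, then `x` is a power of `x³`, so `xβ = β` and
`0 = (1 + x + x²)β = 3β`, impossible when `3` is invertible.
Conversely, if `ord x = 3m`, then `β = (1 - x)(1 + x³ + ⋯ + x^{3(m-1)})` is nonzero (its coefficient
at `1` is `1`) and `(1 + x + x²)β = 1 - x^{3m} = 0`.
-/

open MonoidAlgebra Finset

theorem pow_mul_eq_self_of_mul_eq_self {M : Type*} [Monoid M] {a b : M} (h : a * b = b) (n : ℕ) :
    a ^ n * b = b := by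
  induction n with
  | zero => rw [pow_zero, one_mul]
  | succ n ih => rw [pow_succ, mul_assoc, h, ih]

theorem one_add_add_sq_eq_geom_sum {R : Type*} [Semiring R] (a : R) :
    1 + a + a ^ 2 = ∑ i ∈ range 3, a ^ i := by
  simp [sum_range_succ]

namespace MonoidAlgebra

variable {k G : Type*}

section Semiring

variable [Semiring k]

theorem coeff_one_geom_sum_of [Monoid G] {g : G} {n : ℕ} (hn₀ : n ≠ 0) (hn : n ≤ orderOf g) :
    (∑ i ∈ range n, of k G g ^ i).coeff 1 = 1 := by
  classical
  rw [coeff_sum, Finsupp.finsetSum_apply, sum_eq_single_of_mem 0 (mem_range.mpr (by omega))]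
  · simp
  · intro i hi hi₀
    rw [← map_pow, of_apply, coeff_single, Finsupp.single_eq_of_ne]
    exact (pow_ne_one_of_lt_orderOf hi₀ ((mem_range.mp hi).trans_le hn)).symm

theorem coeff_geom_sum_of_eq_zero [Monoid G] {g h : G} (hh : ∀ i : ℕ, g ^ i ≠ h) (n : ℕ) :
    (∑ i ∈ range n, of k G g ^ i).coeff h = 0 := by
  rw [coeff_sum, Finsupp.finsetSum_apply]
  refine sum_eq_zero fun i _ ↦ ?_
  rw [← map_pow, of_apply, coeff_single, Finsupp.single_eq_of_ne (hh i).symm]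

theorem isOfFinOrder_of_of_mul_eq_self [Group G] {g : G} {β : MonoidAlgebra k G} (hβ : β ≠ 0)
    (h : of k G g * β = β) : IsOfFinOrder g := by
  obtain ⟨a, ha⟩ := Finsupp.support_nonempty_iff.mpr (coeff_eq_zero.not.mpr hβ)
  have hmem (n : ℕ) : (g ^ n)⁻¹ * a ∈ β.coeff.support := by
    have hfix : single (g ^ n) (1 : k) * β = β := by
      simpa using pow_mul_eq_self_of_mul_eq_self h n
    rwa [Finsupp.mem_support_iff, ← one_mul (β.coeff _), ← coeff_single_mul_apply, hfix,
      ← Finsupp.mem_support_iff]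
  by_contra hg
  have hinj : Function.Injective fun n : ℕ ↦ (g ^ n)⁻¹ * a := fun m n hmn ↦
    injective_pow_iff_not_isOfFinOrder.mpr hg (by simpa using hmn)
  exact Set.infinite_of_injective_forall_mem hinj hmem β.coeff.support.finite_toSet

end Semiring

variable [Ring k] [Group G]

theorem isOfFinOrder_and_three_dvd_orderOf_of_mul_eq_zero (h3 : IsUnit (3 : k)) {x : G}
    {β : MonoidAlgebra k G} (hβ : β ≠ 0) (h : (1 + of k G x + of k G x ^ 2) * β = 0) :
    IsOfFinOrder x ∧ 3 ∣ orderOf x := by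
  set X := of k G x
  have hx3 : of k G (x ^ 3) * β = β := by
    have : (1 - X ^ 3) * β = 0 := by
      rw [← mul_neg_geom_sum, mul_assoc, ← one_add_add_sq_eq_geom_sum, h, mul_zero]
    rwa [sub_mul, one_mul, sub_eq_zero, eq_comm, ← map_pow] at this
  have hfin : IsOfFinOrder x :=
    (isOfFinOrder_pow.mp (isOfFinOrder_of_of_mul_eq_self hβ hx3)).resolve_right three_ne_zero
  refine ⟨hfin, ?_⟩
  by_contra hndvd
  obtain ⟨m, hm⟩ :=
    exists_pow_eq_self_of_coprime (Nat.prime_three.coprime_iff_not_dvd.mpr hndvd)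
  have hx : X * β = β := by
    simpa only [← map_pow, hm] using pow_mul_eq_self_of_mul_eq_self hx3 m
  have h3β : (3 : MonoidAlgebra k G) * β = 0 := by
    rw [← h, add_mul, add_mul, sq, mul_assoc, hx, hx]
    noncomm_ring
  have h3' : IsUnit (3 : MonoidAlgebra k G) := by
    rw [← map_ofNat (singleOneRingHom (M := G)) 3]
    exact h3.map _
  exact hβ (h3'.mul_right_eq_zero.mp h3β)

variable [Nontrivial k]

theorem one_add_of_add_of_sq_ne_zero {x : G} (hx : 3 ≤ orderOf x) :
    1 + of k G x + of k G x ^ 2 ≠ 0 := by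
  intro h
  have := coeff_one_geom_sum_of (k := k) three_ne_zero hx
  rw [← one_add_add_sq_eq_geom_sum, h, coeff_zero, Finsupp.coe_zero, Pi.zero_apply] at this
  exact zero_ne_one this

theorem exists_ne_zero_one_add_of_add_of_sq_mul_eq_zero {x : G} (hx : IsOfFinOrder x)
    (h3 : 3 ∣ orderOf x) :
    ∃ β : MonoidAlgebra k G, β ≠ 0 ∧ (1 + of k G x + of k G x ^ 2) * β = 0 := by
  set N := ∑ i ∈ range (orderOf (x ^ 3)), of k G (x ^ 3) ^ i
  refine ⟨(1 - of k G x) * N, fun h ↦ ?_, ?_⟩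
  · have hN1 : N.coeff 1 = 1 :=
      coeff_one_geom_sum_of (orderOf_pos_iff.mpr hx.pow).ne' le_rfl
    have hNx : N.coeff x⁻¹ = 0 := by
      refine coeff_geom_sum_of_eq_zero (fun i hi ↦ ?_) _
      have : 3 ∣ 3 * i + 1 := h3.trans (orderOf_dvd_of_pow_eq_one (by
        rw [pow_succ, pow_mul, hi, inv_mul_cancel]))
      omega
    have := congrArg (fun γ : MonoidAlgebra k G ↦ γ.coeff 1) h
    simp [sub_mul, coeff_sub, of_apply, hN1, hNx] at this
  · rw [← mul_assoc, one_add_add_sq_eq_geom_sum, geom_sum_mul_neg, ← map_pow, mul_neg_geom_sum,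
      ← map_pow, pow_orderOf_eq_one, map_one, sub_self]

end MonoidAlgebra

theorem one_add_x_add_x_sq_zero_divisor_iff
    {G : Type*} [Group G] (x : G) :
    (((1 + MonoidAlgebra.single x 1 + MonoidAlgebra.single (x ^ 2) 1 :
        MonoidAlgebra (ZMod 2) G) ≠ 0) ∧
      ∃ β : MonoidAlgebra (ZMod 2) G, β ≠ 0 ∧
        (1 + MonoidAlgebra.single x 1 + MonoidAlgebra.single (x ^ 2) 1) * β = 0) ↔
    (IsOfFinOrder x ∧ 3 ∣ orderOf x) := by
  simp only [← of_apply, map_pow]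
  constructor
  · rintro ⟨-, β, hβ, h⟩
    exact isOfFinOrder_and_three_dvd_orderOf_of_mul_eq_zero (by decide) hβ h
  · rintro ⟨hx, h3⟩
    exact ⟨one_add_of_add_of_sq_ne_zero (Nat.le_of_dvd hx.orderOf_pos h3),
      exists_ne_zero_one_add_of_add_of_sq_mul_eq_zero hx h3⟩
end

section
/- Let n > 1 be an integer and A = {t₀, t₁, …, t_k} ⊆ ℤ/nℤ with representatives t₀ = 0 and 1 ≤ t₁ < t₂ < ⋯ < t_k ≤ n−1, and suppose every element of the multiset union of A, A+1, A+2 has multiplicity 2. Then for every i ∈ {1, 2, …, k}, either t_i = t_{i−1} + 1 or t_i = t_{i−1} + 2 (as integers). -/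
/-!
If two consecutive elements `a < b` of `A` had `b ≥ a + 3`, then `a + 1` and `a + 2` would both
miss `A`; since `a + 2 < n` there is no wrap-around, so `a + 2` would lie in `A + 2` only and have
multiplicity one.
-/

open scoped Classical

/-- Every element appearing in the multiset union of `A`, `A+1`, `A+2` (subsets of `ℤ/nℤ`)
has multiplicity exactly `2`. -/
def MultiplicityTwo {n : ℕ} (A : Set (ZMod n)) : Prop :=
  ∀ z : ZMod n, (z ∈ A ∨ z - 1 ∈ A ∨ z - 2 ∈ A) →
    ((if z ∈ A then 1 else 0) + (if z - 1 ∈ A then 1 else 0) +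
      (if z - 2 ∈ A then 1 else 0) : ℕ) = 2

theorem MultiplicityTwo.add_one_mem_or_add_two_mem {n : ℕ} {A : Set (ZMod n)}
    (h : MultiplicityTwo A) {x : ZMod n} (hx : x ∈ A) : x + 1 ∈ A ∨ x + 2 ∈ A := by
  have key := h (x + 2) (Or.inr (Or.inr (by simpa using hx)))
  rw [show x + 2 - 1 = x + 1 by ring, add_sub_cancel_right, if_pos hx] at key
  by_contra! hnot
  rw [if_neg hnot.1, if_neg hnot.2] at key
  exact absurd key (by decide)

theorem natCast_mem_setOf_exists_eq_natCast_iff {n k m : ℕ} {t : ℕ → ℕ}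
    (ht : ∀ j ≤ k, t j < n) (hm : m < n) :
    (m : ZMod n) ∈ {z : ZMod n | ∃ j ≤ k, z = (t j : ZMod n)} ↔ ∃ j ≤ k, m = t j := by
  refine exists_congr fun j => and_congr_right fun hj => ?_
  rw [ZMod.natCast_eq_natCast_iff', Nat.mod_eq_of_lt hm, Nat.mod_eq_of_lt (ht j hj)]

theorem StrictMonoOn.not_lt_lt_succ {k i j : ℕ} {t : ℕ → ℕ} (hmono : StrictMonoOn t (Set.Iic k))
    (hi : i + 1 ≤ k) (hj : j ≤ k) : ¬(t i < t j ∧ t j < t (i + 1)) := by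
  rintro ⟨hij, hji⟩
  rw [hmono.lt_iff_lt (by simp; omega) hj] at hij
  rw [hmono.lt_iff_lt hj hi] at hji
  omega

theorem consecutive_gap_one_or_two_general
    (n k : ℕ) (t : ℕ → ℕ)
    (hmono : ∀ i j, i < j → j ≤ k → t i < t j)
    (htk : t k ≤ n - 1)
    (A : Set (ZMod n)) (hA : A = {z : ZMod n | ∃ i ≤ k, z = (t i : ZMod n)})
    (hmul : MultiplicityTwo A) :
    ∀ i, 1 ≤ i → i ≤ k → t i = t (i - 1) + 1 ∨ t i = t (i - 1) + 2 := by
  intro i hi hik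
  obtain ⟨i, rfl⟩ : ∃ j, i = j + 1 := ⟨i - 1, by omega⟩
  rw [Nat.add_sub_cancel]
  by_contra! hne
  have hgap : t i + 3 ≤ t (i + 1) := by have := hmono i (i + 1) (by omega) hik; omega
  have hsmono : StrictMonoOn t (Set.Iic k) := fun a _ b hb hab => hmono a b hab hb
  have hle : ∀ j ≤ k, t j ≤ t k := fun j hj => hsmono.monotoneOn hj (Set.mem_Iic.mpr le_rfl) hj
  have hlt : ∀ j ≤ k, t j < n := fun j hj => by
    have := hle j hj; have := hle _ hik; omega
  have hgap_free : ∀ m, t i < m → m < t i + 3 → (m : ZMod n) ∉ A := by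
    intro m hm₁ hm₂ hmA
    rw [hA, natCast_mem_setOf_exists_eq_natCast_iff hlt (by have := hlt _ hik; omega)] at hmA
    obtain ⟨j, hj, rfl⟩ := hmA
    exact hsmono.not_lt_lt_succ hik hj ⟨hm₁, by omega⟩
  rcases hmul.add_one_mem_or_add_two_mem (hA ▸ ⟨i, by omega, rfl⟩ : (t i : ZMod n) ∈ A) with h | h
  · exact hgap_free (t i + 1) (by omega) (by omega) (by exact_mod_cast h)
  · exact hgap_free (t i + 2) (by omega) (by omega) (by exact_mod_cast h)

theorem consecutive_gap_one_or_two
    (n k : ℕ) (hn : 1 < n) (t : ℕ → ℕ)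
    (ht0 : t 0 = 0) (hmono : ∀ i j, i < j → j ≤ k → t i < t j)
    (htk : t k ≤ n - 1)
    (A : Set (ZMod n)) (hA : A = {z : ZMod n | ∃ i ≤ k, z = (t i : ZMod n)})
    (hmul : MultiplicityTwo A) :
    ∀ i, 1 ≤ i → i ≤ k → t i = t (i - 1) + 1 ∨ t i = t (i - 1) + 2 :=
  consecutive_gap_one_or_two_general n k t hmono htk A hA hmul
end

section
/- Let n > 1 be an integer and A = {t₀, t₁, …, t_k} ⊆ ℤ/nℤ with representatives t₀ = 0 and 1 ≤ t₁ < t₂ < ⋯ < t_k ≤ n−1, and suppose every element of the multiset union of A, A+1, A+2 has multiplicity 2. Then for every i ∈ {1, 2, …, k}, either t_i = t_{i−1} + 1 and t_{i−1} + 2 ∉ A, or t_i = t_{i−1} + 2 and t_{i−1} + 1 ∉ A (sums taken as integers, membership in ℤ/nℤ). -/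
open scoped Classical

/-! Multiplicity two at `a + 2` says that exactly one of `a + 1`, `a + 2` follows `a ∈ A`; since the
`t i` are sorted representatives below `n`, that element must be the next one, `t (i + 1)`. -/

theorem MultiplicityTwo.add_one_mem_iff_add_two_notMem {n : ℕ} {A : Set (ZMod n)}
    (hA : MultiplicityTwo A) {a : ZMod n} (ha : a ∈ A) : a + 1 ∈ A ↔ a + 2 ∉ A := by
  have h := hA (a + 2) (Or.inr (Or.inr (by simpa using ha)))
  rw [show a + 2 - 1 = a + 1 by ring, show a + 2 - 2 = a by ring, if_pos ha] at h
  by_cases h1 : a + 1 ∈ A <;> by_cases h2 : a + 2 ∈ A <;> simp_all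

section SortedRepresentatives

variable {n k : ℕ} {t : ℕ → ℕ}

theorem eq_of_natCast_mem_of_strictMonoOn (ht : StrictMonoOn t (Set.Iic k)) (htk : t k < n)
    {m : ℕ} (hm : m < n) (hmem : (m : ZMod n) ∈ {z : ZMod n | ∃ j ≤ k, z = (t j : ZMod n)}) :
    ∃ j ≤ k, m = t j := by
  obtain ⟨j, hj, hmj⟩ := hmem
  have htj : t j < n := (ht.monotoneOn hj Set.self_mem_Iic (Set.mem_Iic.mp hj)).trans_lt htk
  rw [ZMod.natCast_eq_natCast_iff', Nat.mod_eq_of_lt hm, Nat.mod_eq_of_lt htj] at hmj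
  exact ⟨j, hj, hmj⟩

theorem natCast_notMem_of_lt_of_lt (ht : StrictMonoOn t (Set.Iic k)) (htk : t k < n)
    {i m : ℕ} (hi : i + 1 ≤ k) (him : t i < m) (hmi : m < t (i + 1)) :
    (m : ZMod n) ∉ {z : ZMod n | ∃ j ≤ k, z = (t j : ZMod n)} := by
  intro hmem
  have hm : m < n := hmi.trans_le (ht.monotoneOn hi Set.self_mem_Iic hi) |>.trans htk
  obtain ⟨j, hj, rfl⟩ := eq_of_natCast_mem_of_strictMonoOn ht htk hm hmem
  have hij : i < j := (ht.lt_iff_lt (Set.mem_Iic.mpr (by omega)) hj).mp him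
  have hji : j < i + 1 := (ht.lt_iff_lt hj hi).mp hmi
  omega

end SortedRepresentatives

theorem consecutive_gap_dichotomy_general
    (n k : ℕ) (t : ℕ → ℕ)
    (hmono : ∀ i j, i < j → j ≤ k → t i < t j)
    (htk : t k ≤ n - 1)
    (A : Set (ZMod n)) (hA : A = {z : ZMod n | ∃ i ≤ k, z = (t i : ZMod n)})
    (hmul : MultiplicityTwo A) :
    ∀ i, 1 ≤ i → i ≤ k →
      (t i = t (i - 1) + 1 ∧ ((t (i - 1) + 2 : ℕ) : ZMod n) ∉ A) ∨
      (t i = t (i - 1) + 2 ∧ ((t (i - 1) + 1 : ℕ) : ZMod n) ∉ A) := by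
  intro i hi hik
  obtain ⟨i, rfl⟩ : ∃ j, i = j + 1 := ⟨i - 1, by omega⟩
  simp only [Nat.add_sub_cancel]
  push_cast
  have ht : StrictMonoOn t (Set.Iic k) := fun a _ b hb hab => hmono a b hab hb
  have htk' : t k < n := by have := hmono 0 k (by omega) le_rfl; omega
  have hlt : t i < t (i + 1) := hmono i (i + 1) (Nat.lt_succ_self i) hik
  have hgap (m : ℕ) (him : t i < m) (hmi : m < t (i + 1)) : (m : ZMod n) ∉ A :=
    hA ▸ natCast_notMem_of_lt_of_lt ht htk' hik him hmi
  have mem (j : ℕ) (hj : j ≤ k) : (t j : ZMod n) ∈ A := hA ▸ ⟨j, hj, rfl⟩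
  have hdich := hmul.add_one_mem_iff_add_two_notMem (mem i (by omega))
  by_cases h1 : (t i : ZMod n) + 1 ∈ A
  · have : ¬ t i + 1 < t (i + 1) := fun h => hgap (t i + 1) (by omega) h (by exact_mod_cast h1)
    exact .inl ⟨by omega, hdich.mp h1⟩
  · have h2 := not_not.mp (mt hdich.mpr h1)
    have hne : t (i + 1) ≠ t i + 1 := fun h => h1 (by exact_mod_cast h ▸ mem (i + 1) hik)
    have : ¬ t i + 2 < t (i + 1) := fun h => hgap (t i + 2) (by omega) h (by exact_mod_cast h2)
    exact .inr ⟨by omega, h1⟩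

theorem consecutive_gap_dichotomy
    (n k : ℕ) (hn : 1 < n) (t : ℕ → ℕ)
    (ht0 : t 0 = 0) (hmono : ∀ i j, i < j → j ≤ k → t i < t j)
    (htk : t k ≤ n - 1)
    (A : Set (ZMod n)) (hA : A = {z : ZMod n | ∃ i ≤ k, z = (t i : ZMod n)})
    (hmul : MultiplicityTwo A) :
    ∀ i, 1 ≤ i → i ≤ k →
      (t i = t (i - 1) + 1 ∧ ((t (i - 1) + 2 : ℕ) : ZMod n) ∉ A) ∨
      (t i = t (i - 1) + 2 ∧ ((t (i - 1) + 1 : ℕ) : ZMod n) ∉ A) :=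
  consecutive_gap_dichotomy_general n k t hmono htk A hA hmul
end

section
/- Let n > 1 be an integer and A = {t₀, t₁, …, t_k} ⊆ ℤ/nℤ with representatives t₀ = 0 and 1 ≤ t₁ < t₂ < ⋯ < t_k ≤ n−1, and suppose every element of the multiset union of A, A+1, A+2 has multiplicity 2. If t_i − 1 ∉ A for some i ∈ {1, 2, …, k}, then t_i + 1 (mod n) ∈ A; furthermore, if i < k, then t_{i+1} = t_i + 1. -/
open scoped Classical

/-- `z + 1` is covered by `A + 1` but not by `A + 2`, so it must also lie in `A`. -/
theorem MultiplicityTwo.add_one_mem {n : ℕ} {A : Set (ZMod n)} (hA : MultiplicityTwo A)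
    {z : ZMod n} (hz : z ∈ A) (hz' : z - 1 ∉ A) : z + 1 ∈ A := by
  by_contra h
  have hcount := hA (z + 1) (Or.inr (Or.inl (by simpa using hz)))
  rw [add_sub_cancel_right, show z + 1 - 2 = z - 1 by ring] at hcount
  simp [h, hz, hz'] at hcount

theorem StrictMonoOn.eq_add_one_of_apply_eq_add_one {t : ℕ → ℕ} {k i j : ℕ}
    (ht : StrictMonoOn t (Set.Iic k)) (hi : i ≤ k) (hj : j ≤ k) (h : t j = t i + 1) :
    j = i + 1 := by
  have hij : i < j := (ht.lt_iff_lt hi hj).1 (by omega)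
  by_contra hne
  have h₁ : t i < t (i + 1) := ht hi (show i + 1 ≤ k by omega) (by omega)
  have h₂ : t (i + 1) < t j := ht (show i + 1 ≤ k by omega) hj (by omega)
  omega

theorem ZMod.natCast_eq_natCast_iff_of_lt {n a b : ℕ} (ha : a < n) (hb : b < n) :
    (a : ZMod n) = b ↔ a = b := by
  rw [ZMod.natCast_eq_natCast_iff', Nat.mod_eq_of_lt ha, Nat.mod_eq_of_lt hb]

theorem succ_mem_of_pred_not_mem_general
    (n k : ℕ) (t : ℕ → ℕ)
    (hmono : ∀ i j, i < j → j ≤ k → t i < t j)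
    (htk : t k ≤ n - 1)
    (A : Set (ZMod n)) (hA : A = {z : ZMod n | ∃ i ≤ k, z = (t i : ZMod n)})
    (hmul : MultiplicityTwo A) :
    ∀ i, 1 ≤ i → i ≤ k → ((t i : ZMod n) - 1 ∉ A →
      ((t i : ZMod n) + 1 ∈ A ∧ (i < k → t (i + 1) = t i + 1))) := by
  intro i _ hik hpred
  have hsucc : (t i : ZMod n) + 1 ∈ A := hmul.add_one_mem (hA ▸ ⟨i, hik, rfl⟩) hpred
  refine ⟨hsucc, fun hlt => ?_⟩
  have ht : StrictMonoOn t (Set.Iic k) := fun a _ b hb hab => hmono a b hab hb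
  obtain ⟨j, hjk, hj⟩ : ∃ j ≤ k, (t i : ZMod n) + 1 = t j := by rwa [hA] at hsucc
  have hti : t i < t k := hmono i k hlt le_rfl
  have htj : t j ≤ t k := ht.monotoneOn hjk Set.self_mem_Iic hjk
  -- both sides are below `t k + 1 ≤ n`, so the congruence holds in `ℕ`
  have hval : t j = t i + 1 := by
    have hcast : ((t i + 1 : ℕ) : ZMod n) = t j := by push_cast; exact hj
    exact ((ZMod.natCast_eq_natCast_iff_of_lt (by omega) (by omega)).1 hcast).symm
  exact ht.eq_add_one_of_apply_eq_add_one hik hjk hval ▸ hval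

theorem succ_mem_of_pred_not_mem
    (n k : ℕ) (hn : 1 < n) (t : ℕ → ℕ)
    (ht0 : t 0 = 0) (hmono : ∀ i j, i < j → j ≤ k → t i < t j)
    (htk : t k ≤ n - 1)
    (A : Set (ZMod n)) (hA : A = {z : ZMod n | ∃ i ≤ k, z = (t i : ZMod n)})
    (hmul : MultiplicityTwo A) :
    ∀ i, 1 ≤ i → i ≤ k → ((t i : ZMod n) - 1 ∉ A →
      ((t i : ZMod n) + 1 ∈ A ∧ (i < k → t (i + 1) = t i + 1))) :=
  succ_mem_of_pred_not_mem_general n k t hmono htk A hA hmul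
end

section
/- Let n > 1 be an integer and A = {t₀, t₁, …, t_k} ⊆ ℤ/nℤ with representatives t₀ = 0 and 1 ≤ t₁ < t₂ < ⋯ < t_k ≤ n−1, and suppose every element of the multiset union of A, A+1, A+2 has multiplicity 2. If 0 ∈ A+1, then t_k = n−1 and 1 ∉ A. If 0 ∈ A+2, then t_k = n−2 and 1 ∈ A. -/
/-!
The multiplicity condition at `0` and at `1`, both of which are covered since `0 ∈ A`, says that
exactly one of `-1, -2` lies in `A`, and exactly one of `-1, 1`. Since the `tᵢ` are distinct
residues in `[0, t_k]`, an element `-m = n - m` of `A` forces `t_k ≥ n - m`, and `-1 ∉ A` rules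
out `t_k = n - 1`.
-/

open scoped Classical

namespace MultiplicityTwo

variable {n : ℕ} {A : Set (ZMod n)} {z : ZMod n}

theorem sub_one_mem_iff_sub_two_notMem (h : MultiplicityTwo A) (hz : z ∈ A) :
    z - 1 ∈ A ↔ z - 2 ∉ A := by
  have hcount := h z (Or.inl hz)
  by_cases h1 : z - 1 ∈ A <;> by_cases h2 : z - 2 ∈ A <;> simp [hz, h1, h2] at hcount ⊢

theorem add_one_mem_iff_sub_one_notMem (h : MultiplicityTwo A) (hz : z ∈ A) :
    z + 1 ∈ A ↔ z - 1 ∉ A := by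
  have hcount := h (z + 1) (Or.inr (Or.inl (by rwa [add_sub_cancel_right])))
  rw [add_sub_cancel_right, show z + 1 - 2 = z - 1 by ring] at hcount
  by_cases h1 : z + 1 ∈ A <;> by_cases h2 : z - 1 ∈ A <;> simp [hz, h1, h2] at hcount ⊢

end MultiplicityTwo

theorem ZMod.zero_sub_natCast {n m : ℕ} (hm : m ≤ n) :
    (0 : ZMod n) - m = ((n - m : ℕ) : ZMod n) := by
  rw [Nat.cast_sub hm, ZMod.natCast_self]

theorem le_of_natCast_mem_of_strictMono {n k m : ℕ} {t : ℕ → ℕ}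
    (hmono : ∀ i j, i < j → j ≤ k → t i < t j) (htk : t k < n) (hm : m < n)
    (hmem : ∃ i ≤ k, (m : ZMod n) = t i) : m ≤ t k := by
  obtain ⟨i, hik, hi⟩ := hmem
  have hti : t i ≤ t k := hik.lt_or_eq.elim (fun h => (hmono i k h le_rfl).le) (· ▸ le_rfl)
  rw [ZMod.natCast_eq_natCast_iff', Nat.mod_eq_of_lt hm, Nat.mod_eq_of_lt (by omega)] at hi
  omega

theorem last_element_of_zero_mem_translate
    (n k : ℕ) (hn : 1 < n) (t : ℕ → ℕ)
    (ht0 : t 0 = 0) (hmono : ∀ i j, i < j → j ≤ k → t i < t j)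
    (htk : t k ≤ n - 1)
    (A : Set (ZMod n)) (hA : A = {z : ZMod n | ∃ i ≤ k, z = (t i : ZMod n)})
    (hmul : MultiplicityTwo A) :
    ((0 : ZMod n) - 1 ∈ A → t k = n - 1 ∧ (1 : ZMod n) ∉ A) ∧
    ((0 : ZMod n) - 2 ∈ A → t k = n - 2 ∧ (1 : ZMod n) ∈ A) := by
  have h0 : (0 : ZMod n) ∈ A := hA ▸ ⟨0, k.zero_le, by simp [ht0]⟩
  have hle : ∀ m, m ≤ n → 0 < m → (0 : ZMod n) - m ∈ A → n - m ≤ t k := fun m hmn hm hmA =>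
    le_of_natCast_mem_of_strictMono hmono (by omega) (by omega)
      (hA ▸ ZMod.zero_sub_natCast hmn ▸ hmA)
  have h1 : (1 : ZMod n) ∈ A ↔ 0 - 1 ∉ A := by
    simpa only [zero_add] using hmul.add_one_mem_iff_sub_one_notMem h0
  have h2 := hmul.sub_one_mem_iff_sub_two_notMem h0
  constructor
  · intro hm1
    have := hle 1 (by omega) one_pos (by exact_mod_cast hm1)
    exact ⟨by omega, fun h => h1.mp h hm1⟩
  · intro hm2
    have hm1 : (0 : ZMod n) - 1 ∉ A := fun h => h2.mp h hm2
    have htk1 : t k ≠ n - 1 := fun h => by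
      have hcast := ZMod.zero_sub_natCast (n := n) hn.le
      rw [Nat.cast_one, ← h] at hcast
      exact hm1 (hcast ▸ hA ▸ ⟨k, le_rfl, rfl⟩)
    have := hle 2 (by omega) two_pos (by exact_mod_cast hm2)
    exact ⟨by omega, h1.mpr hm1⟩
end

section
/- Let n > 1 be an integer and A = {t₀, t₁, …, t_k} ⊆ ℤ/nℤ with representatives t₀ = 0 and 1 ≤ t₁ < t₂ < ⋯ < t_k ≤ n−1, and suppose every element of the multiset union of A, A+1, A+2 has multiplicity 2. If 1 ∈ A, then t_k = n−2; if 1 ∉ A, then t_k = n−1. -/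
/-!
Look at the multiplicities of `1` and `0`, to which `0 ∈ A` contributes. If `1 ∈ A`, the
multiplicity of `1` is already `2`, so `-1 ∉ A`; the multiplicity of `0` then forces `-2 ∈ A`.
If `1 ∉ A`, the multiplicity of `1` forces `-1 ∈ A`. Since the representatives `t i` lie in
`[0, n)`, with `t k` the largest, these memberships pin down `t k`.
-/

open scoped Classical

theorem ZMod.natCast_sub_eq_neg {n m : ℕ} (h : m ≤ n) : ((n - m : ℕ) : ZMod n) = -m := by
  rw [Nat.cast_sub h, ZMod.natCast_self, zero_sub]

theorem ZMod.natCast_mem_image_iff {n k m : ℕ} {t : ℕ → ℕ} (ht : ∀ i ≤ k, t i < n)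
    (hm : m < n) :
    (m : ZMod n) ∈ {z : ZMod n | ∃ i ≤ k, z = (t i : ZMod n)} ↔ ∃ i ≤ k, t i = m := by
  refine exists_congr fun i => and_congr_right fun hi => ?_
  rw [eq_comm, ZMod.natCast_eq_natCast_iff', Nat.mod_eq_of_lt (ht i hi), Nat.mod_eq_of_lt hm]

namespace MultiplicityTwo

variable {n : ℕ} {A : Set (ZMod n)} {a : ZMod n}

theorem sub_one_notMem (h : MultiplicityTwo A) (ha : a ∈ A) (hsucc : a + 1 ∈ A) : a - 1 ∉ A := by
  intro hpred
  have := h (a + 1) (Or.inl hsucc)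
  rw [add_sub_cancel_right, show a + 1 - 2 = a - 1 by ring] at this
  simp [ha, hsucc, hpred] at this

theorem sub_two_mem (h : MultiplicityTwo A) (ha : a ∈ A) (hpred : a - 1 ∉ A) : a - 2 ∈ A := by
  by_contra hpred₂
  have := h a (Or.inl ha)
  simp [ha, hpred, hpred₂] at this

theorem sub_one_mem (h : MultiplicityTwo A) (ha : a ∈ A) (hsucc : a + 1 ∉ A) : a - 1 ∈ A := by
  by_contra hpred
  have := h (a + 1) (Or.inr (Or.inl (by simpa using ha)))
  rw [add_sub_cancel_right, show a + 1 - 2 = a - 1 by ring] at this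
  simp [ha, hsucc, hpred] at this

end MultiplicityTwo

theorem last_element_determined_by_one_mem
    (n k : ℕ) (hn : 1 < n) (t : ℕ → ℕ)
    (ht0 : t 0 = 0) (hmono : ∀ i j, i < j → j ≤ k → t i < t j)
    (htk : t k ≤ n - 1)
    (A : Set (ZMod n)) (hA : A = {z : ZMod n | ∃ i ≤ k, z = (t i : ZMod n)})
    (hmul : MultiplicityTwo A) :
    ((1 : ZMod n) ∈ A → t k = n - 2) ∧ ((1 : ZMod n) ∉ A → t k = n - 1) := by
  have hle : ∀ i ≤ k, t i ≤ t k := fun i hi =>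
    hi.lt_or_eq.elim (fun hik => (hmono i k hik le_rfl).le) (fun hik => hik ▸ le_rfl)
  have hmem (m : ℕ) (hm : m ≤ n) (hm₀ : 0 < m) : -(m : ZMod n) ∈ A ↔ ∃ i ≤ k, t i = n - m := by
    rw [hA, ← ZMod.natCast_sub_eq_neg hm]
    exact ZMod.natCast_mem_image_iff (fun i hi => by have := hle i hi; omega) (by omega)
  have h0 : (0 : ZMod n) ∈ A := hA ▸ ⟨0, k.zero_le, by simp [ht0]⟩
  refine ⟨fun h1 => ?_, fun h1 => ?_⟩
  · have hneg1 : (-1 : ZMod n) ∉ A := by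
      simpa using hmul.sub_one_notMem h0 (by simpa using h1)
    have hneg2 : -((2 : ℕ) : ZMod n) ∈ A := by
      simpa using hmul.sub_two_mem h0 (by simpa using hneg1)
    obtain ⟨i, hi, hti⟩ := (hmem 2 hn (by norm_num)).1 hneg2
    have htk_ne : t k ≠ n - 1 := fun hk =>
      hneg1 (by simpa using (hmem 1 hn.le one_pos).2 ⟨k, le_rfl, hk⟩)
    have := hle i hi
    omega
  · obtain ⟨i, hi, hti⟩ := (hmem 1 hn.le one_pos).1
      (by simpa using hmul.sub_one_mem h0 (by simpa using h1))
    have := hle i hi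
    omega
end

section
/- Let n > 1 be an integer and A = {t₀, t₁, …, t_k} ⊆ ℤ/nℤ with representatives t₀ = 0 and 1 ≤ t₁ < t₂ < ⋯ < t_k ≤ n−1, and suppose every element of the multiset union of A, A+1, A+2 has multiplicity 2. Then t_i = t_{i−2} + 3 for all i ∈ {2, 3, …, k}, and exactly one of the following holds: (1) if 1 ∈ A, then t₁ = 1, t_k = n−2, and t_i = t_{i−1} + 1 for odd i while t_i = t_{i−1} + 2 for even i (1 ≤ i ≤ k); (2) if 1 ∉ A, then t₁ = 2, t_k = n−1, and t_i = t_{i−1} + 1 for even i while t_i = t_{i−1} + 2 for odd i (1 ≤ i ≤ k). -/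
/-!
Since `0 ∈ A` and every point covered by `A`, `A + 1`, `A + 2` is covered exactly twice, an
induction starting from the window `{0, 1, 2}` shows that every window `{m, m + 1, m + 2}` of
consecutive residues contains exactly two elements of `A`. Comparing consecutive windows gives
`m + 3 ∈ A ↔ m ∈ A`, so `A` consists of the residues `≡ 0` or `≡ r` mod 3 for some `r ∈ {1, 2}`;
this description is compatible with wrapping around mod `n` only if `3 ∣ n`. The `tᵢ` are then the
increasing enumeration of `{m < n | m ≡ 0 or r mod 3}`, i.e. `tᵢ = 3 ⌊i / 2⌋ + r (i mod 2)`, and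
`t_k = n - 3 + r`.
-/

open scoped Classical

open Function Set

/-- For `p m := (m : ZMod n) ∈ A` this is the multiplicity of `m + 2` in the multiset union of
`A`, `A + 1`, `A + 2`. -/
noncomputable def windowCount (p : ℕ → Prop) (m : ℕ) : ℕ :=
  (if p m then 1 else 0) + (if p (m + 1) then 1 else 0) + (if p (m + 2) then 1 else 0)

theorem periodic_three_of_windowCount_eq_two {p : ℕ → Prop} (h : ∀ m, windowCount p m = 2) :
    Periodic p 3 := by
  intro m
  have h₀ := h m
  have h₁ := h (m + 1)
  simp only [windowCount, add_assoc, Nat.reduceAdd] at h₀ h₁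
  apply propext
  split_ifs at h₀ h₁ <;> tauto

namespace MultiplicityTwo

variable {n : ℕ} {A : Set (ZMod n)}

theorem windowCount_natCast_eq_two_of_ne_zero (hA : MultiplicityTwo A) {m : ℕ}
    (hm : windowCount (fun m : ℕ ↦ (m : ZMod n) ∈ A) m ≠ 0) :
    windowCount (fun m : ℕ ↦ (m : ZMod n) ∈ A) m = 2 := by
  have h := hA ((m + 2 : ℕ) : ZMod n)
  rw [show ((m + 2 : ℕ) : ZMod n) - 1 = (m + 1 : ℕ) by push_cast; ring,
    show ((m + 2 : ℕ) : ZMod n) - 2 = m by push_cast; ring] at h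
  simp only [windowCount] at hm ⊢
  split_ifs at h hm ⊢ <;> simp_all

theorem windowCount_natCast_eq_two (hA : MultiplicityTwo A) (h0 : (0 : ZMod n) ∈ A) (m : ℕ) :
    windowCount (fun m : ℕ ↦ (m : ZMod n) ∈ A) m = 2 := by
  induction m with
  | zero => exact hA.windowCount_natCast_eq_two_of_ne_zero (by simp [windowCount, h0])
  | succ m ih =>
    refine hA.windowCount_natCast_eq_two_of_ne_zero ?_
    simp only [windowCount] at ih ⊢
    split_ifs at ih ⊢ <;> simp_all

theorem exists_natCast_mem_iff (hA : MultiplicityTwo A) (h0 : (0 : ZMod n) ∈ A) :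
    ∃ r, 0 < r ∧ r < 3 ∧ ∀ m : ℕ, (m : ZMod n) ∈ A ↔ m % 3 = 0 ∨ m % 3 = r := by
  have hper := periodic_three_of_windowCount_eq_two (hA.windowCount_natCast_eq_two h0)
  have hwin := hA.windowCount_natCast_eq_two h0 0
  have h0' : ((0 : ℕ) : ZMod n) ∈ A := by simpa using h0
  refine ⟨if ((1 : ℕ) : ZMod n) ∈ A then 1 else 2, by split_ifs <;> omega,
    by split_ifs <;> omega, fun m ↦ ?_⟩
  rw [← hper.map_mod_nat m]
  simp only [windowCount, zero_add] at hwin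
  have : m % 3 < 3 := Nat.mod_lt _ (by norm_num)
  interval_cases m % 3 <;> split_ifs at hwin ⊢ <;> simp_all

theorem three_dvd (hA : MultiplicityTwo A) (h0 : (0 : ZMod n) ∈ A) : 3 ∣ n := by
  obtain ⟨r, hr0, hr3, hmem⟩ := hA.exists_natCast_mem_iff h0
  have hn : (n : ZMod n) ∈ A := by simpa using h0
  -- `n + (3 - r)` and `3 - r` agree in `ZMod n`, but if `n ≡ r [MOD 3]` only the first is `≡ 0` mod 3
  have hshift : (n + (3 - r)) % 3 = 0 ∨ (n + (3 - r)) % 3 = r ↔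
      (3 - r) % 3 = 0 ∨ (3 - r) % 3 = r := by
    rw [← hmem, ← hmem, Nat.cast_add, ZMod.natCast_self, zero_add]
  rw [hmem] at hn
  omega

end MultiplicityTwo

theorem StrictMonoOn.eqOn_of_image_Iic_eq {f t : ℕ → ℕ} {k : ℕ} (hf : StrictMono f)
    (ht : StrictMonoOn t (Iic k)) (h0 : t 0 = f 0) (himg : t '' Iic k = range f ∩ Iic (t k)) :
    EqOn t f (Iic k) := by
  intro i hi
  induction i with
  | zero => exact h0
  | succ i ih =>
    have hik : i ∈ Iic k := mem_Iic.mpr (Nat.le_of_succ_le (mem_Iic.mp hi))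
    have ih := ih hik
    obtain ⟨⟨j, hj⟩, -⟩ : t (i + 1) ∈ range f ∩ Iic (t k) := himg ▸ mem_image_of_mem t hi
    have hij : i < j := hf.lt_iff_lt.mp (by rw [hj, ← ih]; exact ht hik hi i.lt_succ_self)
    have hle : f (i + 1) ≤ t (i + 1) := hj ▸ hf.monotone hij
    obtain ⟨i', hi', hti'⟩ : f (i + 1) ∈ t '' Iic k :=
      himg ▸ ⟨mem_range_self _, hle.trans (ht.monotoneOn hi self_mem_Iic (mem_Iic.mp hi))⟩
    have hii' : i < i' := (ht.lt_iff_lt hik hi').mp (by rw [hti', ih]; exact hf i.lt_succ_self)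
    exact le_antisymm (hti' ▸ ht.monotoneOn hi hi' hii') hle

section Enumeration

variable {n k r : ℕ} {t : ℕ → ℕ}

def residueEnum (r i : ℕ) : ℕ := 3 * (i / 2) + r * (i % 2)

theorem residueEnum_add_two (r i : ℕ) : residueEnum r (i + 2) = residueEnum r i + 3 := by
  simp only [residueEnum, Nat.add_mod_right, Nat.add_div_right i two_pos]
  ring

theorem residueEnum_add_one (hr : r ≤ 3) (i : ℕ) :
    residueEnum r (i + 1) = residueEnum r i + if Even i then r else 3 - r := by
  rcases Nat.even_or_odd' i with ⟨j, rfl | rfl⟩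
  · simp [residueEnum, Nat.mul_add_div]
  · have hodd : ¬Even (2 * j + 1) := Nat.not_even_iff_odd.mpr (odd_two_mul_add_one j)
    have hdiv : (2 * j + 1) / 2 = j := by omega
    simp only [residueEnum, hodd, if_false, show 2 * j + 1 + 1 = 2 * (j + 1) by ring,
      Nat.mul_mod_right, Nat.mul_div_cancel_left _ two_pos, hdiv, Nat.mul_add_mod]
    omega

theorem residueEnum_strictMono (hr0 : 0 < r) (hr3 : r < 3) : StrictMono (residueEnum r) := by
  refine strictMono_nat_of_lt_succ fun i ↦ ?_
  rw [residueEnum_add_one hr3.le]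
  split_ifs <;> omega

theorem mem_range_residueEnum (hr0 : 0 < r) (hr3 : r < 3) {m : ℕ} :
    m ∈ range (residueEnum r) ↔ m % 3 = 0 ∨ m % 3 = r := by
  constructor
  · rintro ⟨i, rfl⟩
    interval_cases r <;> simp only [residueEnum] <;> omega
  · intro hm
    refine ⟨2 * (m / 3) + if m % 3 = 0 then 0 else 1, ?_⟩
    interval_cases r <;> split_ifs <;> simp only [residueEnum] <;> omega

theorem eqOn_residueEnum (hr0 : 0 < r) (hr3 : r < 3) (ht : StrictMonoOn t (Iic k))
    (ht0 : t 0 = 0) (htn : t k < n) (hmem : ∀ m < n, m % 3 = 0 ∨ m % 3 = r ↔ m ∈ t '' Iic k) :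
    EqOn t (residueEnum r) (Iic k) := by
  refine ht.eqOn_of_image_Iic_eq (residueEnum_strictMono hr0 hr3) (by simp [ht0, residueEnum]) ?_
  ext m
  rw [mem_inter_iff, mem_range_residueEnum hr0 hr3, mem_Iic]
  constructor
  · rintro ⟨i, hi, rfl⟩
    exact ⟨(hmem _ ((ht.monotoneOn hi self_mem_Iic hi).trans_lt htn)).mpr ⟨i, hi, rfl⟩,
      ht.monotoneOn hi self_mem_Iic hi⟩
  · rintro ⟨hm, hmk⟩
    exact (hmem m (hmk.trans_lt htn)).mp hm

theorem last_eq_sub_three_add (hr3 : r < 3) (h3 : 3 ∣ n) (ht : StrictMonoOn t (Iic k))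
    (htn : t k < n) (hmem : ∀ m < n, m % 3 = 0 ∨ m % 3 = r ↔ m ∈ t '' Iic k) :
    t k = n - 3 + r := by
  have hlast := (hmem (t k) htn).mpr ⟨k, self_mem_Iic, rfl⟩
  obtain ⟨i, hi, hti⟩ := (hmem (n - 3 + r) (by omega)).mp (by omega)
  have := ht.monotoneOn hi self_mem_Iic hi
  omega

theorem eq_sub_two_add_three (heq : EqOn t (residueEnum r) (Iic k)) {i : ℕ} (hi : 2 ≤ i)
    (hik : i ≤ k) : t i = t (i - 2) + 3 := by
  obtain ⟨j, rfl⟩ := Nat.exists_eq_add_of_le' hi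
  rw [heq (mem_Iic.mpr hik), heq (mem_Iic.mpr (by omega)), Nat.add_sub_cancel,
    residueEnum_add_two]

theorem eq_sub_one_add (hr3 : r ≤ 3) (heq : EqOn t (residueEnum r) (Iic k)) {i : ℕ} (hi : 1 ≤ i)
    (hik : i ≤ k) : (Odd i → t i = t (i - 1) + r) ∧ (Even i → t i = t (i - 1) + (3 - r)) := by
  obtain ⟨j, rfl⟩ := Nat.exists_eq_add_of_le' hi
  rw [heq (mem_Iic.mpr hik), heq (mem_Iic.mpr (by omega)), Nat.add_sub_cancel,
    residueEnum_add_one hr3]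
  by_cases hj : Even j <;> simp [hj, Nat.even_add_one, Nat.odd_add_one]

end Enumeration

theorem natCast_mem_iff_mem_image {n k m : ℕ} {t : ℕ → ℕ} (htn : ∀ i ≤ k, t i < n) (hm : m < n) :
    (m : ZMod n) ∈ {z : ZMod n | ∃ i ≤ k, z = t i} ↔ m ∈ t '' Iic k := by
  simp only [mem_ofPred_eq, mem_image, mem_Iic, ZMod.natCast_eq_natCast_iff', Nat.mod_eq_of_lt hm]
  exact exists_congr fun i ↦ and_congr_right fun hi ↦ by rw [Nat.mod_eq_of_lt (htn i hi), eq_comm]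

theorem structure_of_multiplicity_two_subset
    (n k : ℕ) (hn : 1 < n) (t : ℕ → ℕ)
    (ht0 : t 0 = 0) (hmono : ∀ i j, i < j → j ≤ k → t i < t j)
    (htk : t k ≤ n - 1)
    (A : Set (ZMod n)) (hA : A = {z : ZMod n | ∃ i ≤ k, z = (t i : ZMod n)})
    (hmul : MultiplicityTwo A) :
    (∀ i, 2 ≤ i → i ≤ k → t i = t (i - 2) + 3) ∧
    ((1 : ZMod n) ∈ A → t 1 = 1 ∧ t k = n - 2 ∧
      ∀ i, 1 ≤ i → i ≤ k →
        (Odd i → t i = t (i - 1) + 1) ∧ (Even i → t i = t (i - 1) + 2)) ∧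
    ((1 : ZMod n) ∉ A → t 1 = 2 ∧ t k = n - 1 ∧
      ∀ i, 1 ≤ i → i ≤ k →
        (Even i → t i = t (i - 1) + 1) ∧ (Odd i → t i = t (i - 1) + 2)) := by
  have ht : StrictMonoOn t (Iic k) := fun i hi j hj hij ↦ hmono i j hij hj
  have htn : ∀ i ≤ k, t i < n := fun i hi ↦ (ht.monotoneOn hi self_mem_Iic hi).trans_lt (by omega)
  have h0 : (0 : ZMod n) ∈ A := hA ▸ ⟨0, k.zero_le, by simp [ht0]⟩
  obtain ⟨r, hr0, hr3, hmemA⟩ := hmul.exists_natCast_mem_iff h0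
  have hmem (m : ℕ) (hm : m < n) : m % 3 = 0 ∨ m % 3 = r ↔ m ∈ t '' Iic k :=
    (hmemA m).symm.trans (hA ▸ natCast_mem_iff_mem_image htn hm)
  have heq := eqOn_residueEnum hr0 hr3 ht ht0 (htn k le_rfl) hmem
  have h3 := hmul.three_dvd h0
  have hlast := last_eq_sub_three_add hr3 h3 ht (htn k le_rfl) hmem
  have hk : 1 ≤ k := Nat.one_le_iff_ne_zero.mpr fun hk ↦ by subst hk; omega
  have ht1 : t 1 = r := by simpa [residueEnum] using heq (mem_Iic.mpr hk)
  have hr1 : (1 : ZMod n) ∈ A ↔ r = 1 := by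
    rw [← Nat.cast_one, hmemA]
    omega
  refine ⟨fun i ↦ eq_sub_two_add_three heq, fun h1 ↦ ?_, fun h1 ↦ ?_⟩
  · obtain rfl := hr1.mp h1
    exact ⟨ht1, by omega, fun i ↦ eq_sub_one_add hr3.le heq⟩
  · obtain rfl : r = 2 := by have := mt hr1.mpr h1; omega
    exact ⟨ht1, by omega, fun i hi hik ↦ (eq_sub_one_add hr3.le heq hi hik).symm⟩
end
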